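/- arXiv:1311.2705 — 10 statements merged into one kernel-verified Lean document; each statement's English description precedes it below -/
import Mathlib

section
/- Let q = 2^s for some positive integer s and let F = 𝔽_{q²} be the finite field with q² elements. Then the number of pairs (a,b) ∈ F × F satisfying b² + b = a^{q+1} is exactly 2q². -/
section Aux

lemma aux_add_eq_zero_iff_eq {R : Type*} [Ring R] [CharP R 2] {a b : R} :
    a + b = 0 ↔ a = b := by
  rw [← CharTwo.sub_eq_add, sub_eq_zero]

/-- The characteristic is 2. -/
lemma aux_char2 (s : ℕ) (hs : 0 < s) (q : ℕ) (hq : q = 2 ^ s)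
    (F : Type) [Field F] [Fintype F] (hF : Fintype.card F = q ^ 2) :
    ringChar F = 2 := by
  obtain ⟨n, hp, hc⟩ := FiniteField.card F (ringChar F)
  have h1 : ringChar F ∣ Fintype.card F := by
    rw [hc]; exact dvd_pow_self _ (by positivity)
  rw [hF, hq, ← pow_mul] at h1
  have := hp.dvd_of_dvd_pow h1
  exact (Nat.prime_dvd_prime_iff_eq hp Nat.prime_two).mp this

/-- Every element of the subfield `{x | x^q = x}` is of the form `u + u^q`. -/
lemma aux_trace_surj (s : ℕ) (hs : 0 < s) (q : ℕ) (hq : q = 2 ^ s)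
    (F : Type) [Field F] [Fintype F] (hF : Fintype.card F = q ^ 2)
    (c : F) (hc : c ^ q = c) : ∃ u : F, u + u ^ q = c := by
  haveI h2 : CharP F 2 := by
    have := aux_char2 s hs q hq F hF
    exact this ▸ ringChar.charP F
  haveI : Fact (Nat.Prime 2) := ⟨Nat.prime_two⟩
  have hq2 : 2 ≤ q := by rw [hq]; exact Nat.one_lt_two_pow_iff.mpr (by omega)
  have hfrob : ∀ x y : F, (x + y) ^ q = x ^ q + y ^ q := by
    intro x y
    subst hq
    exact add_pow_char_pow x y 2 s
  have hpowcard : ∀ x : F, x ^ (q * q) = x := by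
    intro x
    have := FiniteField.pow_card x
    rwa [hF, pow_two] at this
  set f : F →+ F :=
    { toFun := fun x => x + x ^ q
      map_zero' := by simp [zero_pow (by omega : q ≠ 0)]
      map_add' := by
        intro x y
        show x + y + (x + y) ^ q = x + x ^ q + (y + y ^ q)
        rw [hfrob x y]; ring } with hf
  have hfapply : ∀ x : F, f x = x + x ^ q := fun x => rfl
  set S : Set F := {x : F | x ^ q = x} with hS
  -- kernel of f is S
  have hker : (f.ker : Set F) = S := by
    ext x
    simp only [SetLike.mem_coe, AddMonoidHom.mem_ker, hfapply, hS, Set.mem_setOf_eq]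
    constructor
    · intro h; exact (aux_add_eq_zero_iff_eq.mp h).symm
    · intro h; rw [h]; exact CharTwo.add_self_eq_zero x
  -- range of f is inside S
  have hrange : (f.range : Set F) ⊆ S := by
    rintro x ⟨y, rfl⟩
    simp only [hfapply, hS, Set.mem_setOf_eq]
    rw [hfrob y (y ^ q), ← pow_mul, hpowcard y, add_comm]
  have hSfin : S.Finite := Set.toFinite S
  -- S has at most q elements
  have hScard_le : S.ncard ≤ q := by
    classical
    set p : Polynomial F := Polynomial.X ^ q - Polynomial.X with hp
    have hdeg : p.natDegree = q := by
      rw [hp, Polynomial.natDegree_sub_eq_left_of_natDegree_lt] <;>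
        simp [Polynomial.natDegree_X_pow, Polynomial.natDegree_X] <;> omega
    have hp0 : p ≠ 0 := by
      intro h0
      rw [h0] at hdeg
      simp at hdeg; omega
    have hsub : (hSfin.toFinset).val ⊆ p.roots := by
      intro x hx
      have hx' : x ∈ S := by
        have : x ∈ hSfin.toFinset := hx
        rwa [Set.Finite.mem_toFinset] at this
      rw [Polynomial.mem_roots hp0]
      simp only [Polynomial.IsRoot, hp, Polynomial.eval_sub, Polynomial.eval_pow,
        Polynomial.eval_X]
      rw [hx']; ring
    have hcard := Polynomial.card_le_degree_of_subset_roots hsub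
    rw [hdeg] at hcard
    rwa [Set.ncard_eq_toFinset_card S hSfin]
  -- counting: card range * card ker = q^2
  have hcount : Nat.card f.range * Nat.card f.ker = q * q := by
    have h1 := AddSubgroup.card_eq_card_quotient_mul_card_addSubgroup f.ker
    have h2 : Nat.card (F ⧸ f.ker) = Nat.card f.range :=
      Nat.card_congr (QuotientAddGroup.quotientKerEquivRange f).toEquiv
    rw [h2] at h1
    rw [← h1, Nat.card_eq_fintype_card, hF, pow_two]
  have hkercard : Nat.card f.ker = S.ncard := by
    rw [← Nat.card_coe_set_eq]
    exact Nat.card_congr (Equiv.setCongr hker)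
  have hrangecard : Nat.card f.range = (f.range : Set F).ncard :=
    (Nat.card_coe_set_eq _).symm
  have hrangecard_le : Nat.card f.range ≤ S.ncard := by
    rw [hrangecard]
    exact Set.ncard_le_ncard hrange hSfin
  -- deduce range = S
  have hrange_eq : (f.range : Set F) = S := by
    apply Set.eq_of_subset_of_ncard_le hrange _ hSfin
    have h1 : Nat.card f.range * S.ncard = q * q := by rw [← hkercard]; exact hcount
    nlinarith [hrangecard_le, h1, hScard_le, hrangecard]
  have hcS : c ∈ S := hc
  rw [← hrange_eq] at hcS
  obtain ⟨u, hu⟩ := hcS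
  exact ⟨u, hu⟩

/-- Existence of a solution of `b^2 + b = c` for `c` in the subfield. -/
lemma aux_AS_solvable (s : ℕ) (hs : 0 < s) (q : ℕ) (hq : q = 2 ^ s)
    (F : Type) [Field F] [Fintype F] (hF : Fintype.card F = q ^ 2)
    (c : F) (hc : c ^ q = c) : ∃ b : F, b ^ 2 + b = c := by
  haveI h2 : CharP F 2 := by
    have := aux_char2 s hs q hq F hF
    exact this ▸ ringChar.charP F
  haveI : Fact (Nat.Prime 2) := ⟨Nat.prime_two⟩
  obtain ⟨u, hu⟩ := aux_trace_surj s hs q hq F hF c hc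
  refine ⟨∑ i ∈ Finset.range s, u ^ (2 ^ i), ?_⟩
  have hsq : (∑ i ∈ Finset.range s, u ^ (2 ^ i)) ^ 2
      = ∑ i ∈ Finset.range s, u ^ (2 ^ (i + 1)) := by
    rw [sum_pow_char]
    congr 1
    funext i
    rw [← pow_mul, pow_succ]
  rw [hsq]
  have hstep : ∑ i ∈ Finset.range s, u ^ 2 ^ (i + 1) + ∑ i ∈ Finset.range s, u ^ 2 ^ i
      = ∑ i ∈ Finset.range s, (u ^ 2 ^ (i + 1) - u ^ 2 ^ i) := by
    rw [Finset.sum_sub_distrib, CharTwo.sub_eq_add]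
  rw [hstep, Finset.sum_range_sub (fun i => u ^ 2 ^ i) s,
    CharTwo.sub_eq_add, pow_zero, pow_one, ← hq, add_comm]
  exact hu

end Aux

/-- Let `q = 2^s` for a positive integer `s` and let `F` be the finite field with `q²`
elements. Then the number of pairs `(a,b) ∈ F × F` with `b² + b = a^(q+1)` is `2q²`. -/
theorem first_curve_point_count (s : ℕ) (hs : 0 < s) (q : ℕ) (hq : q = 2 ^ s)
    (F : Type) [Field F] [Fintype F] (hF : Fintype.card F = q ^ 2) :
    Nat.card {p : F × F // p.2 ^ 2 + p.2 = p.1 ^ (q + 1)} = 2 * q ^ 2 := by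
  haveI h2 : CharP F 2 := by
    have := aux_char2 s hs q hq F hF
    exact this ▸ ringChar.charP F
  haveI : Fact (Nat.Prime 2) := ⟨Nat.prime_two⟩
  have hpowcard : ∀ x : F, x ^ (q * q) = x := by
    intro x
    have := FiniteField.pow_card x
    rwa [hF, pow_two] at this
  have hmem : ∀ a : F, (a ^ (q + 1)) ^ q = a ^ (q + 1) := by
    intro a
    rw [← pow_mul]
    have h : (q + 1) * q = q * q + q := by ring
    rw [h, pow_add, hpowcard a, ← pow_succ']
  have hex : ∀ a : F, ∃ b : F, b ^ 2 + b = a ^ (q + 1) := fun a =>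
    aux_AS_solvable s hs q hq F hF _ (hmem a)
  classical
  choose b0 hb0 using hex
  set g : F × Bool → {p : F × F // p.2 ^ 2 + p.2 = p.1 ^ (q + 1)} :=
    fun x => ⟨(x.1, b0 x.1 + if x.2 then 1 else 0), by
      have hb := hb0 x.1
      rcases hx : x.2 with _ | _ <;> simp only [if_true, if_false]
      · simpa using hb
      · have h1 : (b0 x.1 + 1) ^ 2 = b0 x.1 ^ 2 + 1 ^ 2 := add_pow_char _ _ 2
        rw [h1, one_pow]
        calc b0 x.1 ^ 2 + 1 + (b0 x.1 + 1)
            = b0 x.1 ^ 2 + b0 x.1 + (1 + 1) := by ring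
          _ = x.1 ^ (q + 1) := by
              rw [CharTwo.add_self_eq_zero (1 : F), add_zero, hb]⟩ with hg
  have hbij : Function.Bijective g := by
    constructor
    · rintro ⟨a1, t1⟩ ⟨a2, t2⟩ h
      simp only [hg, Subtype.mk_eq_mk, Prod.mk.injEq] at h
      obtain ⟨ha, hb⟩ := h
      subst ha
      have ht : (if t1 then (1:F) else 0) = if t2 then 1 else 0 := add_left_cancel hb
      rcases t1 <;> rcases t2 <;> simp_all
    · rintro ⟨⟨a, b⟩, hab⟩
      simp only at hab
      have key : (b + b0 a) ^ 2 + (b + b0 a) = 0 := by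
        have h1 : (b + b0 a) ^ 2 = b ^ 2 + b0 a ^ 2 := add_pow_char _ _ 2
        rw [h1]
        calc b ^ 2 + b0 a ^ 2 + (b + b0 a)
            = (b ^ 2 + b) + (b0 a ^ 2 + b0 a) := by ring
          _ = a ^ (q + 1) + a ^ (q + 1) := by rw [hab, hb0 a]
          _ = 0 := CharTwo.add_self_eq_zero _
      have hmul : (b + b0 a) * ((b + b0 a) + 1) = 0 := by
        have h1 : (b + b0 a) * ((b + b0 a) + 1) = (b + b0 a) ^ 2 + (b + b0 a) := by ring
        rw [h1, key]
      rcases mul_eq_zero.mp hmul with h | h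
      · refine ⟨(a, false), ?_⟩
        have hb' : b = b0 a := aux_add_eq_zero_iff_eq.mp h
        exact Subtype.ext (by simp [hg, hb'])
      · refine ⟨(a, true), ?_⟩
        have hb1 : b + b0 a = 1 := aux_add_eq_zero_iff_eq.mp h
        have hb' : b = b0 a + 1 := by
          calc b = b + (b0 a + b0 a) := by
                rw [CharTwo.add_self_eq_zero, add_zero]
            _ = (b + b0 a) + b0 a := by ring
            _ = 1 + b0 a := by rw [hb1]
            _ = b0 a + 1 := by ring
        exact Subtype.ext (by simp [hg, hb'])
  have hcard := Nat.card_eq_of_bijective g hbij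
  rw [← hcard, Nat.card_prod, Nat.card_eq_fintype_card, Nat.card_eq_fintype_card, hF,
    Fintype.card_bool]
  ring
end

section
/- Let q = 2^s for some positive integer s and let F = 𝔽_{q²}. For every a ∈ F there exist exactly 2 elements b ∈ F such that b² + b = a^{q+1}. -/
/-- Let `q = 2^s` for a positive integer `s` and `F = 𝔽_{q²}`. For every `a ∈ F` there are
exactly two elements `b ∈ F` with `b² + b = a^(q+1)`. -/
theorem first_curve_fibre_count (s : ℕ) (hs : 0 < s) (q : ℕ) (hq : q = 2 ^ s)
    (F : Type) [Field F] [Fintype F] (hF : Fintype.card F = q ^ 2) (a : F) :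
    Nat.card {b : F // b ^ 2 + b = a ^ (q + 1)} = 2 := by
  classical
  have hcard : Fintype.card F = 2 ^ (2 * s) := by
    rw [hF, hq, ← pow_mul, mul_comm]
  -- characteristic 2
  obtain ⟨p, hc⟩ := CharP.exists F
  haveI := hc
  obtain ⟨n, hp, hn⟩ := FiniteField.card F p
  have hp2 : p = 2 := by
    have hdvd : p ∣ 2 ^ (2 * s) := by
      rw [← hcard, hn]; exact dvd_pow_self p n.pos.ne'
    exact (Nat.prime_dvd_prime_iff_eq hp Nat.prime_two).mp (hp.dvd_of_dvd_pow hdvd)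
  subst hp2
  haveI : Fact (Nat.Prime 2) := ⟨Nat.prime_two⟩
  have h2 : (2 : F) = 0 := CharTwo.two_eq_zero
  have hpowcard : ∀ x : F, x ^ 2 ^ (2 * s) = x := by
    intro x; rw [← hcard]; exact FiniteField.pow_card x
  set c : F := a ^ (q + 1) with hc'
  -- key: fibre description
  have key : ∀ d b₀ : F, b₀ ^ 2 + b₀ = d → ∀ b : F, b ^ 2 + b = d ↔ b = b₀ ∨ b = b₀ + 1 := by
    intro d b₀ h₀ b
    constructor
    · intro hb
      have hmul : (b + b₀) * (b + b₀ + 1) = 0 := by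
        linear_combination hb + h₀ + (b * b₀ + d) * h2
      rcases mul_eq_zero.mp hmul with h | h
      · left; linear_combination h - b₀ * h2
      · right; linear_combination h - (b₀ + 1) * h2
    · rintro (rfl | rfl)
      · exact h₀
      · linear_combination h₀ + (b₀ + 1) * h2
  -- trace map
  set T : F → F := fun x => ∑ i ∈ Finset.range (2 * s), x ^ 2 ^ i with hT
  -- T vanishes on the image of b ↦ b^2 + b
  have hT_im : ∀ b : F, T (b ^ 2 + b) = 0 := by
    intro b
    have step : ∀ i : ℕ, (b ^ 2 + b) ^ 2 ^ i = b ^ 2 ^ (i + 1) - b ^ 2 ^ i := by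
      intro i
      rw [add_pow_char_pow, sub_eq_add_neg, CharTwo.neg_eq, ← pow_mul, pow_succ, mul_comm (2^i) 2]
    calc T (b ^ 2 + b) = ∑ i ∈ Finset.range (2 * s), (b ^ 2 ^ (i + 1) - b ^ 2 ^ i) := by
          simp only [hT]; exact Finset.sum_congr rfl fun i _ => step i
      _ = b ^ 2 ^ (2 * s) - b ^ 2 ^ 0 := Finset.sum_range_sub (fun i => b ^ 2 ^ i) (2 * s)
      _ = 0 := by rw [hpowcard, pow_zero, pow_one, sub_self]
  -- T vanishes on c
  have hcq : c ^ q = c := by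
    have haq : a ^ q ^ 2 = a := by rw [← hF]; exact FiniteField.pow_card a
    calc c ^ q = a ^ (q ^ 2) * a ^ q := by rw [hc', ← pow_mul]; ring
      _ = a * a ^ q := by rw [haq]
      _ = c := by rw [hc', pow_succ, mul_comm]
  have hTc : T c = 0 := by
    have hsplit : ∀ i : ℕ, c ^ 2 ^ (s + i) = c ^ 2 ^ i := by
      intro i
      rw [pow_add, pow_mul, ← hq, hcq]
    have hTc2 : T c = (∑ i ∈ Finset.range s, c ^ 2 ^ i)
        + ∑ i ∈ Finset.range s, c ^ 2 ^ (s + i) := by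
      simp only [hT]
      rw [two_mul, Finset.sum_range_add]
    rw [hTc2, Finset.sum_congr rfl fun i _ => hsplit i]
    exact CharTwo.add_self_eq_zero _
  -- counting
  set f : F → F := fun b => b ^ 2 + b with hf
  set I : Finset F := Finset.univ.image f with hI
  set K : Finset F := Finset.univ.filter (fun x => T x = 0) with hK
  have hIK : I ⊆ K := by
    intro x hx
    obtain ⟨b, _, rfl⟩ := Finset.mem_image.mp hx
    exact Finset.mem_filter.mpr ⟨Finset.mem_univ _, hT_im b⟩
  -- K has at most 2^(2s-1) elements via the polynomial ∑ X^(2^i)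
  have hKcard : K.card ≤ 2 ^ (2 * s - 1) := by
    set P : Polynomial F := ∑ i ∈ Finset.range (2 * s), Polynomial.X ^ 2 ^ i with hP
    have hcoeff : P.coeff (2 ^ (2 * s - 1)) = 1 := by
      rw [hP, Polynomial.finset_sum_coeff]
      rw [Finset.sum_eq_single (2 * s - 1)]
      · rw [Polynomial.coeff_X_pow, if_pos rfl]
      · intro i _ hi
        rw [Polynomial.coeff_X_pow, if_neg]
        exact fun h => hi (Nat.pow_right_injective le_rfl h.symm)
      · intro h; exact absurd (Finset.mem_range.mpr (by omega)) h
    have hPne : P ≠ 0 := fun h => by simp [h] at hcoeff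
    have hPdeg : P.natDegree ≤ 2 ^ (2 * s - 1) := by
      apply Polynomial.natDegree_sum_le_of_forall_le
      intro i hi
      rw [Polynomial.natDegree_X_pow]
      exact Nat.pow_le_pow_right (by norm_num) (by have := Finset.mem_range.mp hi; omega)
    have hsub : K ⊆ P.roots.toFinset := by
      intro x hx
      have hx' := (Finset.mem_filter.mp hx).2
      rw [Multiset.mem_toFinset, Polynomial.mem_roots hPne]
      show P.eval x = 0
      rw [hP, Polynomial.eval_finset_sum]
      simpa [hT] using hx'
    calc K.card ≤ P.roots.toFinset.card := Finset.card_le_card hsub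
      _ ≤ Multiset.card P.roots := Multiset.toFinset_card_le _
      _ ≤ P.natDegree := Polynomial.card_roots' P
      _ ≤ 2 ^ (2 * s - 1) := hPdeg
  -- image has at least 2^(2s-1) elements
  have himage_card : 2 ^ (2 * s - 1) ≤ I.card := by
    have hfib : ∀ x ∈ I, (Finset.univ.filter (fun b => f b = x)).card ≤ 2 := by
      intro x hx
      obtain ⟨b₀, _, hb₀⟩ := Finset.mem_image.mp hx
      have hsub2 : Finset.univ.filter (fun b => f b = x) ⊆ {b₀, b₀ + 1} := by
        intro b hb
        have hb' := (Finset.mem_filter.mp hb).2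
        rcases (key x b₀ hb₀ b).mp hb' with h | h <;> simp [h]
      calc _ ≤ ({b₀, b₀ + 1} : Finset F).card := Finset.card_le_card hsub2
        _ ≤ 2 := (Finset.card_insert_le _ _).trans (by simp)
    have h1 : Fintype.card F ≤ 2 * I.card := by
      rw [← Finset.card_univ]
      exact Finset.card_le_mul_card_image Finset.univ 2 hfib
    rw [hcard] at h1
    have h3 : 2 * 2 ^ (2 * s - 1) = 2 ^ (2 * s) := by
      rw [← pow_succ']; congr 1; omega
    omega
  have hIKeq : I = K := Finset.eq_of_subset_of_card_le hIK (hKcard.trans himage_card)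
  -- c is in the image
  have hcK : c ∈ K := Finset.mem_filter.mpr ⟨Finset.mem_univ _, hTc⟩
  rw [← hIKeq] at hcK
  obtain ⟨b₀, _, hb₀⟩ := Finset.mem_image.mp hcK
  -- conclude
  have hset : {b : F | b ^ 2 + b = c} = {b₀, b₀ + 1} := by
    ext b
    simpa using key c b₀ hb₀ b
  have hne : b₀ ≠ b₀ + 1 := by
    intro h
    have : (1 : F) = 0 := by linear_combination -h
    exact one_ne_zero this
  calc Nat.card {b : F // b ^ 2 + b = a ^ (q + 1)}
      = Nat.card {b : F | b ^ 2 + b = c} := rfl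
    _ = ({b : F | b ^ 2 + b = c} : Set F).ncard := Nat.card_coe_set_eq _
    _ = 2 := by rw [hset]; exact Set.ncard_pair hne
end

section
/- Let q = 2^s, F = 𝔽_{q²}, n = 2q², and let (a₁,b₁),…,(a_n,b_n) be an enumeration of all pairs in F × F with b_k² + b_k = a_k^{q+1}. For a nonnegative integer m let C_m ⊆ F^n be the F-linear span of the vectors ((a_k)^i (b_k)^j)_{k=1,…,n} over all pairs (i,j) of nonnegative integers with j ≤ 1 and 2i + (q+1)j ≤ m. Then for every integer m with 0 ≤ m ≤ 2q² + q − 2, the Euclidean dual of C_m equals C_{2q²+q−2−m}, i.e. {v ∈ F^n : Σ_{k=1}^n v_k c_k = 0 for all c ∈ C_m} = C_{2q²+q−2−m}. -/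
/-!
Write `Q = q²` for the size of `F`. In characteristic 2 the fibre of the curve over every
`a ∈ F` is `{b, b + 1}`: at most two points by Artin–Schreier, and exactly two since the curve
has `2Q` points. Summing `x^I y^J` over the fibre gives `a^I (b^J + (b + 1)^J)`, which is `0`
for `J = 0` and `a^I` for `J = 1, 2`; as `∑_a a^I = 0` for `I < Q - 1`, the generators of `C_m`
and `C_{m'}`, `m + m' = 2Q + q - 2`, are orthogonal. Conversely, the same fibre structure makes
the `2Q` vectors `x^i y^j` with `i < Q`, `j ≤ 1` linearly independent, and the involution
`(i, j) ↦ (Q - 1 - i, 1 - j)`, which sends weight `w` to `2Q + q - 1 - w`, shows that at least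
`2Q` of them lie in `C_m` or in `C_{m'}`. Hence `dim C_m + dim C_{m'} ≥ 2Q = n`, and
`C_{m'} = C_m^⊥`.
-/

open Finset

theorem card_le_card_filter_add_card_filter {ι : Type*} [Fintype ι] (w : ι → ℕ)
    {σ : ι → ι} (hσ : σ.Injective) {m m' : ℕ} (hw : ∀ i, w i + w (σ i) ≤ m + m' + 1) :
    Fintype.card ι ≤ #{i | w i ≤ m} + #{i | w i ≤ m'} := by
  have hcompl : #{i | ¬w i ≤ m} ≤ #{i | w i ≤ m'} :=
    card_le_card_of_injOn σ (fun i hi => by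
      simp only [coe_filter, mem_univ, true_and, Set.mem_ofPred_eq] at hi ⊢
      have := hw i
      omega) hσ.injOn
  have := card_filter_add_card_filter_not (s := univ) (fun i => w i ≤ m)
  rw [card_univ] at this
  omega

theorem LinearIndependent.card_le_finrank_of_forall_mem {K V ι : Type*} [Field K]
    [AddCommGroup V] [Module K V] [FiniteDimensional K V] {v : ι → V}
    (hv : LinearIndependent K v) (s : Finset ι)
    {W : Submodule K V} (hs : ∀ i ∈ s, v i ∈ W) : #s ≤ Module.finrank K W := by
  have hspan := finrank_span_eq_card (hv.comp ((↑) : s → ι) Subtype.val_injective)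
  rw [Fintype.card_coe] at hspan
  rw [← hspan]
  exact Submodule.finrank_mono (Submodule.span_le.mpr (by rintro _ ⟨i, rfl⟩; exact hs i i.2))

namespace LinearMap.BilinForm

variable {K V : Type*} [Field K] [AddCommGroup V] [Module K V]

theorem span_le_orthogonal_span (B : LinearMap.BilinForm K V) {s t : Set V}
    (h : ∀ u ∈ s, ∀ v ∈ t, B u v = 0) :
    Submodule.span K t ≤ B.orthogonal (Submodule.span K s) :=
  Submodule.span_le.mpr fun v hv _ hu =>
    (Submodule.span_le (p := LinearMap.ker (B.flip v)) |>.mpr fun u hu => h u hu v hv) hu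

theorem eq_orthogonal_of_le_of_finrank_le [FiniteDimensional K V]
    {B : LinearMap.BilinForm K V} (hB : B.Nondegenerate) {W W' : Submodule K V}
    (hle : W' ≤ B.orthogonal W)
    (hdim : Module.finrank K V ≤ Module.finrank K W + Module.finrank K W') :
    W' = B.orthogonal W := by
  refine Submodule.eq_of_le_of_finrank_le hle ?_
  have := Submodule.finrank_le W
  rw [finrank_orthogonal hB]
  omega

theorem coe_orthogonal_toBilin'_one {ι : Type*} [Fintype ι] [DecidableEq ι]
    (W : Submodule K (ι → K)) :
    ((Matrix.toBilin' 1).orthogonal W : Set (ι → K))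
      = {v | ∀ c ∈ W, ∑ k, v k * c k = 0} := by
  ext v
  simp [Matrix.toBilin'_apply', dotProduct, mul_comm]

end LinearMap.BilinForm

section ArtinSchreier

variable {F : Type*} [Field F]

theorem sq_add_self_eq_iff [CharP F 2] {b c x : F} (hb : b ^ 2 + b = c) :
    x ^ 2 + x = c ↔ x = b ∨ x = b + 1 := by
  have hfactor : x ^ 2 + x - c = (x - b) * (x - (b + 1)) := by
    linear_combination (-1 : F) * hb + (x + b * x - c) * CharTwo.two_eq_zero (R := F)
  rw [← sub_eq_zero, hfactor, mul_eq_zero, sub_eq_zero, sub_eq_zero]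

variable [Fintype F] [DecidableEq F]

def artinSchreierPoints (f : F → F) : Finset (F × F) := {p | p.2 ^ 2 + p.2 = f p.1}

theorem sum_artinSchreierPoints {M : Type*} [AddCommMonoid M] (f : F → F) (g : F × F → M) :
    ∑ p ∈ artinSchreierPoints f, g p
      = ∑ a, ∑ b ∈ ({x | x ^ 2 + x = f a} : Finset F), g (a, b) := by
  simp only [artinSchreierPoints, sum_filter, Fintype.sum_prod_type]

theorem image_eq_artinSchreierPoints {ι : Type*} [Fintype ι] {pt : ι → F × F} {f : F → F}
    (hrange : ∀ p, p ∈ Set.range pt ↔ p.2 ^ 2 + p.2 = f p.1) :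
    univ.image pt = artinSchreierPoints f := by
  ext p
  simp [artinSchreierPoints, ← hrange p]

variable [CharP F 2]

theorem filter_sq_add_self_eq {b c : F} (hb : b ^ 2 + b = c) :
    ({x | x ^ 2 + x = c} : Finset F) = {b, b + 1} := by
  ext x
  simp [sq_add_self_eq_iff hb]

theorem card_filter_sq_add_self_eq_le_two (c : F) : #({x | x ^ 2 + x = c} : Finset F) ≤ 2 := by
  by_cases h : ∃ b, b ^ 2 + b = c
  · obtain ⟨b, hb⟩ := h
    rw [filter_sq_add_self_eq hb]
    exact card_le_two
  · push Not at h
    simp [filter_false_of_mem fun x _ => h x]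

theorem sum_filter_sq_add_self_eq_pow {b c : F} (hb : b ^ 2 + b = c) {J : ℕ} (hJ : J ≤ 2) :
    ∑ x ∈ ({x | x ^ 2 + x = c} : Finset F), x ^ J = if J = 0 then 0 else 1 := by
  have hne : b ≠ b + 1 := by simp
  rw [filter_sq_add_self_eq hb, sum_pair hne]
  interval_cases J
  · simp [CharTwo.add_self_eq_zero]
  · simp only [pow_one, one_ne_zero, if_false]; linear_combination CharTwo.add_self_eq_zero b
  · simp only [CharTwo.add_sq, OfNat.ofNat_ne_zero, if_false, one_pow]
    linear_combination CharTwo.add_self_eq_zero (b ^ 2)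

theorem exists_sq_add_self_eq_of_card_le (f : F → F)
    (hcard : 2 * Fintype.card F ≤ #(artinSchreierPoints f)) (a : F) : ∃ b, b ^ 2 + b = f a := by
  by_contra! hempty
  have hlt : ∑ a', #({x | x ^ 2 + x = f a'} : Finset F) < ∑ _a' : F, 2 :=
    sum_lt_sum (fun a' _ => card_filter_sq_add_self_eq_le_two _)
      ⟨a, mem_univ _, by simp [filter_false_of_mem fun x _ => hempty x]⟩
  rw [card_eq_sum_ones, sum_artinSchreierPoints] at hcard
  simp only [sum_const, card_univ, smul_eq_mul, mul_one] at hcard hlt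
  omega

theorem sum_artinSchreierPoints_pow_mul_pow {f : F → F} (hf : ∀ a, ∃ b, b ^ 2 + b = f a)
    {I J : ℕ} (hJ : J ≤ 2) (hIJ : J = 0 ∨ I < Fintype.card F - 1) :
    ∑ p ∈ artinSchreierPoints f, p.1 ^ I * p.2 ^ J = 0 := by
  have hfiber (a : F) : ∑ b ∈ ({x | x ^ 2 + x = f a} : Finset F), a ^ I * b ^ J
      = a ^ I * if J = 0 then 0 else 1 := by
    obtain ⟨b, hb⟩ := hf a
    rw [← mul_sum, sum_filter_sq_add_self_eq_pow hb hJ]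
  rw [sum_artinSchreierPoints]
  simp only [hfiber]
  rcases hIJ with rfl | hI
  · simp
  · simp [FiniteField.sum_pow_lt_card_sub_one F I hI]

end ArtinSchreier

theorem linearIndependent_pow_fun (F : Type*) [Field F] [Fintype F] :
    LinearIndependent F (fun i : Fin (Fintype.card F) => fun a : F => a ^ (i : ℕ)) := by
  rw [Fintype.linearIndependent_iff]
  intro g hg
  set e := (Fintype.equivFin F).symm
  have hmulVec : (Matrix.vandermonde e).mulVec g = 0 := by
    ext r
    simpa [Matrix.mulVec, dotProduct, Matrix.vandermonde_apply, mul_comm] using congr_fun hg (e r)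
  exact congr_fun (Matrix.eq_zero_of_mulVec_eq_zero
    (Matrix.det_vandermonde_ne_zero_iff.mpr e.injective) hmulVec)

theorem linearIndependent_pow_mul_pow {F ι : Type*} [Field F] [Fintype F] (pt : ι → F × F)
    (hfiber : ∀ a, ∃ b, (a, b) ∈ Set.range pt ∧ (a, b + 1) ∈ Set.range pt) :
    LinearIndependent F (fun ij : Fin (Fintype.card F) × Fin 2 =>
      fun k => (pt k).1 ^ (ij.1 : ℕ) * (pt k).2 ^ (ij.2 : ℕ)) := by
  rw [Fintype.linearIndependent_iff]
  intro g hg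
  set P : Fin 2 → F → F := fun j a => ∑ i, g (i, j) * a ^ (i : ℕ)
  have heval (a b : F) (hab : (a, b) ∈ Set.range pt) : P 0 a + P 1 a * b = 0 := by
    obtain ⟨k, hk⟩ := hab
    have := congr_fun hg k
    simp only [Fintype.sum_prod_type, Fin.sum_univ_two, Finset.sum_apply,
      Pi.smul_apply, smul_eq_mul, hk, Pi.zero_apply, sum_add_distrib] at this
    simpa [P, sum_mul, mul_assoc] using this
  have hP : ∀ a, P 0 a = 0 ∧ P 1 a = 0 := by
    intro a
    obtain ⟨b, hb, hb₁⟩ := hfiber a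
    have h₀ := heval a b hb
    have h₁ := heval a (b + 1) hb₁
    have hP₁ : P 1 a = 0 := by linear_combination h₁ - h₀
    exact ⟨by linear_combination h₀ - b * hP₁, hP₁⟩
  have hcoeff (j : Fin 2) (hj : ∀ a, P j a = 0) (i) : g (i, j) = 0 := by
    rw [Fintype.linearIndependent_iff.mp (linearIndependent_pow_fun F) (fun i => g (i, j))
      (funext fun a => by simpa [P] using hj a)]
  rintro ⟨i, j⟩
  fin_cases j
  · exact hcoeff 0 (fun a => (hP a).1) i
  · exact hcoeff 1 (fun a => (hP a).2) i

section MonomialCode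

variable {F ι : Type*} [Field F]

/-- The evaluation code of `L(m P_∞)`: `x` and `y` have pole orders `2` and `q + 1` at `P_∞`. -/
def monomialCode (pt : ι → F × F) (q m : ℕ) : Submodule F (ι → F) :=
  Submodule.span F {v : ι → F | ∃ i j : ℕ, j ≤ 1 ∧ 2 * i + (q + 1) * j ≤ m ∧
    v = fun k => (pt k).1 ^ i * (pt k).2 ^ j}

variable [Fintype F] [Fintype ι] {pt : ι → F × F} {q : ℕ}

theorem monomialCode_le_orthogonal [DecidableEq F] [DecidableEq ι] [CharP F 2] {f : F → F}
    (hinj : pt.Injective) (hrange : ∀ p, p ∈ Set.range pt ↔ p.2 ^ 2 + p.2 = f p.1)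
    (hsolv : ∀ a, ∃ b, b ^ 2 + b = f a) (hcard : Fintype.card F = q ^ 2) {m m' : ℕ}
    (hmm' : m + m' ≤ 2 * q ^ 2 + q - 2) :
    monomialCode pt q m' ≤ (Matrix.toBilin' 1).orthogonal (monomialCode pt q m) := by
  refine LinearMap.BilinForm.span_le_orthogonal_span _ ?_
  rintro _ ⟨i, j, hj, hw, rfl⟩ _ ⟨i', j', hj', hw', rfl⟩
  have hsum : ∑ k, (pt k).1 ^ (i + i') * (pt k).2 ^ (j + j') = 0 := by
    rw [← sum_image (f := fun p : F × F => p.1 ^ (i + i') * p.2 ^ (j + j')) hinj.injOn,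
      image_eq_artinSchreierPoints hrange]
    refine sum_artinSchreierPoints_pow_mul_pow hsolv (by omega) ?_
    rw [hcard]
    interval_cases j <;> interval_cases j' <;> omega
  simpa only [Matrix.toBilin'_apply', Matrix.one_mulVec, dotProduct, pow_add,
    mul_mul_mul_comm] using hsum

theorem card_filter_le_finrank_monomialCode
    (hfiber : ∀ a, ∃ b, (a, b) ∈ Set.range pt ∧ (a, b + 1) ∈ Set.range pt) (m : ℕ) :
    #{ij : Fin (Fintype.card F) × Fin 2 | 2 * (ij.1 : ℕ) + (q + 1) * ij.2 ≤ m}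
      ≤ Module.finrank F (monomialCode pt q m) :=
  (linearIndependent_pow_mul_pow pt hfiber).card_le_finrank_of_forall_mem _ fun ij hij =>
    Submodule.subset_span ⟨ij.1, ij.2, ij.2.is_le, (mem_filter.mp hij).2, rfl⟩

theorem le_finrank_monomialCode_add_finrank_monomialCode
    (hfiber : ∀ a, ∃ b, (a, b) ∈ Set.range pt ∧ (a, b + 1) ∈ Set.range pt)
    (hcard : Fintype.card F = q ^ 2) {m m' : ℕ} (hmm' : 2 * q ^ 2 + q - 2 ≤ m + m') :
    2 * q ^ 2
      ≤ Module.finrank F (monomialCode pt q m) + Module.finrank F (monomialCode pt q m') := by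
  have hcount := card_le_card_filter_add_card_filter
    (fun ij : Fin (Fintype.card F) × Fin 2 => 2 * (ij.1 : ℕ) + (q + 1) * ij.2)
    (Fin.rev_injective.prodMap Fin.rev_injective) (m := m) (m' := m') fun ⟨i, j⟩ => by
      have hi : (i : ℕ) < q ^ 2 := hcard ▸ i.is_lt
      have hj : (j : ℕ) = 0 ∨ (j : ℕ) = 1 := by omega
      simp only [Prod.map, Fin.val_rev, hcard]
      rcases hj with hj | hj <;> rw [hj] <;> omega
  have := card_filter_le_finrank_monomialCode (q := q) hfiber m
  have := card_filter_le_finrank_monomialCode (q := q) hfiber m'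
  simp only [Fintype.card_prod, Fintype.card_fin, hcard] at hcount
  omega

end MonomialCode

theorem first_curve_euclidean_dual_general (s : ℕ) (q : ℕ) (hq : q = 2 ^ s)
    (F : Type) [Field F] [Fintype F] (hF : Fintype.card F = q ^ 2)
    (n : ℕ) (hn : n = 2 * q ^ 2)
    (pt : Fin n → F × F) (hinj : Function.Injective pt)
    (hrange : ∀ p : F × F, p ∈ Set.range pt ↔ p.2 ^ 2 + p.2 = p.1 ^ (q + 1))
    (C : ℕ → Submodule F (Fin n → F))
    (hC : ∀ m : ℕ, C m = Submodule.span F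
      {v : Fin n → F | ∃ i j : ℕ, j ≤ 1 ∧ 2 * i + (q + 1) * j ≤ m ∧
        v = fun k => (pt k).1 ^ i * (pt k).2 ^ j})
    (m : ℕ) (hm : m ≤ 2 * q ^ 2 + q - 2) :
    {v : Fin n → F | ∀ c ∈ C m, ∑ k, v k * c k = 0}
      = (C (2 * q ^ 2 + q - 2 - m) : Set (Fin n → F)) := by
  classical
  obtain rfl : C = monomialCode pt q := funext hC
  have : CharP F 2 := charP_of_card_eq_prime_pow (by rw [hF, hq, ← pow_mul])
  have hsolv : ∀ a : F, ∃ b, b ^ 2 + b = a ^ (q + 1) := exists_sq_add_self_eq_of_card_le _ (by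
    rw [← image_eq_artinSchreierPoints (f := fun a => a ^ (q + 1)) hrange,
      card_image_of_injective _ hinj, card_univ, Fintype.card_fin, hn, hF])
  have hfiber (a : F) : ∃ b, (a, b) ∈ Set.range pt ∧ (a, b + 1) ∈ Set.range pt := by
    obtain ⟨b, hb⟩ := hsolv a
    exact ⟨b, (hrange _).mpr hb, (hrange _).mpr ((sq_add_self_eq_iff hb).mpr (Or.inr rfl))⟩
  have hdual : monomialCode pt q (2 * q ^ 2 + q - 2 - m)
      = (Matrix.toBilin' 1).orthogonal (monomialCode pt q m) :=
    LinearMap.BilinForm.eq_orthogonal_of_le_of_finrank_le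
      (LinearMap.BilinForm.nondegenerate_toBilin'_of_det_ne_zero' _ (by simp))
      (monomialCode_le_orthogonal hinj hrange hsolv hF (by omega))
      (by
        have := le_finrank_monomialCode_add_finrank_monomialCode (m := m)
          (m' := 2 * q ^ 2 + q - 2 - m) hfiber hF (by omega)
        rw [Module.finrank_fin_fun]
        omega)
  rw [hdual, LinearMap.BilinForm.coe_orthogonal_toBilin'_one]

theorem first_curve_euclidean_dual (s : ℕ) (hs : 0 < s) (q : ℕ) (hq : q = 2 ^ s)
    (F : Type) [Field F] [Fintype F] (hF : Fintype.card F = q ^ 2)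
    (n : ℕ) (hn : n = 2 * q ^ 2)
    (pt : Fin n → F × F) (hinj : Function.Injective pt)
    (hrange : ∀ p : F × F, p ∈ Set.range pt ↔ p.2 ^ 2 + p.2 = p.1 ^ (q + 1))
    (C : ℕ → Submodule F (Fin n → F))
    (hC : ∀ m : ℕ, C m = Submodule.span F
      {v : Fin n → F | ∃ i j : ℕ, j ≤ 1 ∧ 2 * i + (q + 1) * j ≤ m ∧
        v = fun k => (pt k).1 ^ i * (pt k).2 ^ j})
    (m : ℕ) (hm : m ≤ 2 * q ^ 2 + q - 2) :
    {v : Fin n → F | ∀ c ∈ C m, ∑ k, v k * c k = 0}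
      = (C (2 * q ^ 2 + q - 2 - m) : Set (Fin n → F)) :=
  first_curve_euclidean_dual_general s q hq F hF n hn pt hinj hrange C hC m hm
end

section
/- Let q = 2^s, F = 𝔽_{q²}, n = 2q², and let (a₁,b₁),…,(a_n,b_n) be an enumeration of all pairs in F × F with b_k² + b_k = a_k^{q+1}. For a nonnegative integer m let C_m ⊆ F^n be the F-linear span of the vectors ((a_k)^i (b_k)^j)_{k=1,…,n} over all pairs (i,j) of nonnegative integers with j ≤ 1 and 2i + (q+1)j ≤ m. If m ≤ q² + q/2 − 1, then C_m is Euclidean self-orthogonal: for all u, v ∈ C_m, Σ_{k=1}^n u_k v_k = 0. -/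
theorem first_curve_euclidean_self_orthogonal (s : ℕ) (hs : 0 < s) (q : ℕ) (hq : q = 2 ^ s)
    (F : Type) [Field F] [Fintype F] (hF : Fintype.card F = q ^ 2)
    (n : ℕ) (hn : n = 2 * q ^ 2)
    (pt : Fin n → F × F) (hinj : Function.Injective pt)
    (hrange : ∀ p : F × F, p ∈ Set.range pt ↔ p.2 ^ 2 + p.2 = p.1 ^ (q + 1))
    (C : ℕ → Submodule F (Fin n → F))
    (hC : ∀ m : ℕ, C m = Submodule.span F
      {v : Fin n → F | ∃ i j : ℕ, j ≤ 1 ∧ 2 * i + (q + 1) * j ≤ m ∧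
        v = fun k => (pt k).1 ^ i * (pt k).2 ^ j})
    (m : ℕ) (hm : m ≤ q ^ 2 + q / 2 - 1) :
    ∀ u ∈ C m, ∀ v ∈ C m, ∑ k, u k * v k = 0 := by
  classical
  have hq2 : 2 ≤ q := by
    subst hq
    calc 2 = 2 ^ 1 := rfl
    _ ≤ 2 ^ s := Nat.pow_le_pow_right (by norm_num) hs
  have hqeven : q % 2 = 0 := by
    subst hq
    rcases s with _ | s
    · omega
    · simp [Nat.pow_succ, Nat.mul_mod]
  have hqQ : 2 * q ≤ q ^ 2 := by nlinarith
  -- characteristic 2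
  haveI : CharP F 2 := by
    haveI := ringChar.charP F
    have hdvd : ringChar F ∣ Fintype.card F := by
      rw [← CharP.cast_eq_zero_iff F (ringChar F)]
      exact FiniteField.cast_card_eq_zero F
    have hp : (ringChar F).Prime := CharP.char_is_prime F (ringChar F)
    have h2 : ringChar F = 2 := by
      have hd2 : ringChar F ∣ 2 ^ (s * 2) := by
        rw [hF, hq, ← pow_mul] at hdvd; exact hdvd
      have := hp.dvd_of_dvd_pow hd2
      exact (Nat.prime_dvd_prime_iff_eq hp Nat.prime_two).mp this
    rw [← h2]; exact ringChar.charP F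
  have htwo : (2 : F) = 0 := by
    have := CharP.cast_eq_zero F 2
    exact_mod_cast this
  subst hn
  -- fibers
  set Fb : F → Finset F := fun a => Finset.univ.filter (fun b => b ^ 2 + b = a ^ (q + 1))
    with hFbdef
  have hsub : ∀ a b, b ∈ Fb a → Fb a ⊆ {b, b + 1} := by
    intro a b hb b' hb'
    simp only [hFbdef, Finset.mem_filter, Finset.mem_univ, true_and] at hb hb'
    have hx : (b + b') * ((b + b') + 1) = 0 := by
      linear_combination hb + hb' + (b * b' + a ^ (q + 1)) * htwo
    rcases mul_eq_zero.mp hx with h | h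
    · have hbb : b' = b := by linear_combination h - b * htwo
      simp [hbb]
    · have hbb : b' = b + 1 := by linear_combination h - (b + 1) * htwo
      simp [hbb]
  have hpairmem : ∀ a b, b ∈ Fb a → b + 1 ∈ Fb a := by
    intro a b hb
    simp only [hFbdef, Finset.mem_filter, Finset.mem_univ, true_and] at hb ⊢
    linear_combination hb + (b + 1) * htwo
  have hcard2 : ∀ a, (Fb a).card ≤ 2 := by
    intro a
    rcases Finset.eq_empty_or_nonempty (Fb a) with h | ⟨b, hb⟩
    · simp [h]
    · refine le_trans (Finset.card_le_card (hsub a b hb)) ?_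
      refine le_trans (Finset.card_insert_le _ _) ?_
      simp
  have hT : (Finset.univ.filter (fun p : F × F => p.2 ^ 2 + p.2 = p.1 ^ (q + 1)))
      = Finset.univ.image pt := by
    ext p
    simp only [Finset.mem_filter, Finset.mem_univ, true_and, Finset.mem_image]
    rw [← hrange p]
    simp [Set.mem_range, eq_comm]
  have hTcard : (Finset.univ.filter (fun p : F × F => p.2 ^ 2 + p.2 = p.1 ^ (q + 1))).card
      = 2 * q ^ 2 := by
    rw [hT, Finset.card_image_of_injective _ hinj, Finset.card_univ, Fintype.card_fin]
  have hsplit : (Finset.univ.filter (fun p : F × F => p.2 ^ 2 + p.2 = p.1 ^ (q + 1))).card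
      = ∑ a : F, (Fb a).card := by
    rw [Finset.card_filter, Fintype.sum_prod_type]
    refine Finset.sum_congr rfl fun a _ => ?_
    rw [hFbdef]
    rw [Finset.card_filter]
  have hfib : ∀ a : F, (Fb a).card = 2 := by
    have hsum : ∑ a : F, (Fb a).card = ∑ a : F, 2 := by
      rw [← hsplit, hTcard, Finset.sum_const, Finset.card_univ, hF]
      simp [mul_comm]
    intro a
    exact (Finset.sum_eq_sum_iff_of_le (fun i _ => hcard2 i)).mp hsum a (Finset.mem_univ a)
  have hex : ∀ a : F, ∃ b, b ∈ Fb a := by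
    intro a
    have : 0 < (Fb a).card := by rw [hfib a]; norm_num
    exact Finset.card_pos.mp this
  choose β hβ using hex
  have hne : ∀ a : F, β a ≠ β a + 1 := by
    intro a h
    have h1 : (1 : F) = 0 := by linear_combination -h
    exact one_ne_zero h1
  have hFbpair : ∀ a, Fb a = {β a, β a + 1} := by
    intro a
    apply Finset.Subset.antisymm (hsub a (β a) (hβ a))
    intro x hx
    simp only [Finset.mem_insert, Finset.mem_singleton] at hx
    rcases hx with rfl | rfl
    · exact hβ a
    · exact hpairmem a _ (hβ a)
  -- sum formula
  have hsumf : ∀ f : F × F → F, ∑ k, f (pt k) = ∑ a : F, (f (a, β a) + f (a, β a + 1)) := by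
    intro f
    have h1 : ∑ k, f (pt k) = ∑ p ∈ Finset.univ.image pt, f p :=
      (Finset.sum_image (fun x _ y _ h => hinj h)).symm
    rw [h1, ← hT, Finset.sum_filter, Fintype.sum_prod_type]
    refine Finset.sum_congr rfl fun a _ => ?_
    rw [← Finset.sum_filter]
    have heq : (Finset.univ.filter (fun b : F => ((a, b) : F × F).2 ^ 2 + ((a, b) : F × F).2
        = ((a, b) : F × F).1 ^ (q + 1))) = Fb a := by
      rw [hFbdef]
    rw [heq, hFbpair a, Finset.sum_pair (hne a)]
  -- numeric helper
  obtain ⟨Q, hQdef⟩ : ∃ Q, Q = q ^ 2 := ⟨_, rfl⟩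
  rw [← hQdef] at hF hm hqQ
  -- key computation
  have key : ∀ i j i' j' : ℕ, j ≤ 1 → j' ≤ 1 → 2 * i + (q + 1) * j ≤ m →
      2 * i' + (q + 1) * j' ≤ m →
      ∑ k, ((pt k).1 ^ i * (pt k).2 ^ j) * ((pt k).1 ^ i' * (pt k).2 ^ j') = 0 := by
    intro i j i' j' hj hj' hle hle'
    rw [hsumf (fun p => (p.1 ^ i * p.2 ^ j) * (p.1 ^ i' * p.2 ^ j'))]
    have hcardlt : 2 * i + 2 * i' + (q + 1) ≤ 2 * m → i + i' < Fintype.card F - 1 := by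
      intro hge
      rw [hF]
      omega
    interval_cases j <;> interval_cases j'
    · apply Finset.sum_eq_zero
      intro a _
      linear_combination (a ^ i * a ^ i') * htwo
    · have hlt : i + i' < Fintype.card F - 1 := hcardlt (by omega)
      have hz := FiniteField.sum_pow_lt_card_sub_one F (i + i') hlt
      rw [← hz]
      refine Finset.sum_congr rfl fun a _ => ?_
      linear_combination (a ^ i * a ^ i' * β a) * htwo
    · have hlt : i + i' < Fintype.card F - 1 := hcardlt (by omega)
      have hz := FiniteField.sum_pow_lt_card_sub_one F (i + i') hlt
      rw [← hz]
      refine Finset.sum_congr rfl fun a _ => ?_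
      linear_combination (a ^ i * a ^ i' * β a) * htwo
    · have hlt : i + i' < Fintype.card F - 1 := hcardlt (by omega)
      have hz := FiniteField.sum_pow_lt_card_sub_one F (i + i') hlt
      rw [← hz]
      refine Finset.sum_congr rfl fun a _ => ?_
      linear_combination (a ^ i * a ^ i' * (β a ^ 2 + β a)) * htwo
  -- bilinear machinery
  let φ : (Fin (2 * q ^ 2) → F) → (Fin (2 * q ^ 2) → F) →ₗ[F] F := fun g =>
    { toFun := fun v => ∑ k, g k * v k
      map_add' := fun x y => by simp [mul_add, Finset.sum_add_distrib]
      map_smul' := fun c x => by simp [Finset.mul_sum, mul_left_comm] }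
  intro u hu v hv
  have hstep1 : ∀ g : Fin (2 * q ^ 2) → F,
      (∃ i j : ℕ, j ≤ 1 ∧ 2 * i + (q + 1) * j ≤ m ∧
        g = fun k => (pt k).1 ^ i * (pt k).2 ^ j) →
      ∑ k, g k * v k = 0 := by
    intro g hg
    have hle : C m ≤ LinearMap.ker (φ g) := by
      rw [hC]
      apply Submodule.span_le.mpr
      intro w hw
      obtain ⟨i, j, hj, hmle, rfl⟩ := hg
      obtain ⟨i', j', hj', hmle', rfl⟩ := hw
      simp only [SetLike.mem_coe, LinearMap.mem_ker]
      exact key i j i' j' hj hj' hmle hmle'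
    exact hle hv
  have hle2 : C m ≤ LinearMap.ker (φ v) := by
    rw [hC]
    apply Submodule.span_le.mpr
    intro g hg
    simp only [SetLike.mem_coe, LinearMap.mem_ker]
    show ∑ k, v k * g k = 0
    rw [Finset.sum_congr rfl fun k _ => mul_comm (v k) (g k)]
    exact hstep1 g hg
  have hker := hle2 hu
  have : ∑ k, v k * u k = 0 := hker
  calc ∑ k, u k * v k = ∑ k, v k * u k := by
        exact Finset.sum_congr rfl fun k _ => mul_comm (u k) (v k)
    _ = 0 := this
end

section
/- Let q = 2^s, F = 𝔽_{q²}, n = 2q², and let (a₁,b₁),…,(a_n,b_n) be an enumeration of all pairs in F × F with b_k² + b_k = a_k^{q+1}. For a nonnegative integer m let C_m ⊆ F^n be the F-linear span of the vectors ((a_k)^i (b_k)^j)_{k=1,…,n} over all pairs (i,j) of nonnegative integers with j ≤ 1 and 2i + (q+1)j ≤ m. If m ≤ 2q − 2, then C_m is Hermitian self-orthogonal: for all u, v ∈ C_m, Σ_{k=1}^n u_k (v_k)^q = 0. -/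
/-!
Over every `a ∈ 𝔽_{q²}` the curve has exactly the two points `(a, b)` and `(a, b + 1)`:
a fibre of `y² + y = c` has at most two points, and there are `2q²` points in all. Summing
`x^i y^j · (x^{i'} y^{j'})^q` over a fibre therefore leaves `a^N` times `0`, `1` or
`1 + Σ_{t<s} (a^{q+1})^{2^t}`, where `N = i + q i'`; the last value comes from
`b^q = b + Σ_{t<s} c^{2^t}` for `b² + b = c`. The weight bound `m ≤ 2q - 2` keeps every
exponent below `q² - 1`, where the power sums `Σ_a a^N` vanish. Since `(u, v) ↦ Σ u_k v_k^q`
is sesquilinear, vanishing on the generators suffices.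
-/

open Finset

theorem sum_mul_map_eq_zero_of_mem_span {R ι : Type*} [CommSemiring R] [Fintype ι]
    (σ : R →+* R) {S : Set (ι → R)} (hS : ∀ u ∈ S, ∀ v ∈ S, ∑ k, u k * σ (v k) = 0)
    {u v : ι → R} (hu : u ∈ Submodule.span R S) (hv : v ∈ Submodule.span R S) :
    ∑ k, u k * σ (v k) = 0 := by
  induction hu, hv using Submodule.span_induction₂ with
  | mem_mem u v hu hv => exact hS u hu v hv
  | zero_left | zero_right => simp
  | add_left u u' v _ _ _ h h' => simp [add_mul, sum_add_distrib, h, h']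
  | add_right u v v' _ _ _ h h' => simp [mul_add, sum_add_distrib, h, h']
  | smul_left c u v _ _ h => simp [mul_assoc, ← mul_sum, h]
  | smul_right c u v _ _ h =>
    simp only [Pi.smul_apply, smul_eq_mul, map_mul, mul_left_comm (u _), ← mul_sum, h, mul_zero]

section CharTwo

variable {R : Type*} [CommRing R] [CharP R 2]

theorem pow_two_pow_eq_add_sum_of_sq_add_self_eq {b c : R} (h : b ^ 2 + b = c) (k : ℕ) :
    b ^ 2 ^ k = b + ∑ t ∈ range k, c ^ 2 ^ t := by
  induction k with
  | zero => simp
  | succ k ih =>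
    rw [pow_succ, pow_mul, ih, CharTwo.add_sq, CharTwo.sum_sq, sum_range_succ']
    simp only [← pow_mul, ← pow_succ, pow_zero, pow_one]
    linear_combination h - b * CharTwo.two_eq_zero (R := R)

theorem sq_add_self_eq_iff_s4 [IsDomain R] {b₀ b c : R} (h : b₀ ^ 2 + b₀ = c) :
    b ^ 2 + b = c ↔ b = b₀ ∨ b = b₀ + 1 := by
  have : b ^ 2 + b - c = (b - b₀) * (b - (b₀ + 1)) := by
    linear_combination h + (b + b * b₀ - b₀ ^ 2 - b₀) * CharTwo.two_eq_zero (R := R)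
  rw [← sub_eq_zero, this, mul_eq_zero, sub_eq_zero, sub_eq_zero]

theorem pow_mul_pow_two_pow_add_eq {b c : R} (h : b ^ 2 + b = c) (s : ℕ) {j j' : ℕ}
    (hj : j ≤ 1) (hj' : j' ≤ 1) :
    b ^ j * (b ^ j') ^ 2 ^ s + (b + 1) ^ j * ((b + 1) ^ j') ^ 2 ^ s =
      if j = j' then j * (1 + ∑ t ∈ range s, c ^ 2 ^ t) else 1 := by
  have h2 := CharTwo.two_eq_zero (R := R)
  have hfrob : (b + 1) ^ 2 ^ s = b ^ 2 ^ s + 1 := by rw [add_pow_char_pow, one_pow]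
  interval_cases j <;> interval_cases j' <;> norm_num [hfrob]
  · exact h2
  · linear_combination b ^ 2 ^ s * h2
  · linear_combination b * h2
  · rw [pow_two_pow_eq_add_sum_of_sq_add_self_eq h]
    linear_combination (b ^ 2 + b * ∑ t ∈ range s, c ^ 2 ^ t + b) * h2

end CharTwo

theorem Finset.sum_comp_eq_sum_filter_of_injective {ι α M : Type*} [Fintype ι] [Fintype α]
    [AddCommMonoid M] {P : α → Prop} [DecidablePred P] {e : ι → α}
    (he : Function.Injective e) (hrange : ∀ p, p ∈ Set.range e ↔ P p) (g : α → M) :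
    ∑ i, g (e i) = ∑ p ∈ univ.filter P, g p := by
  classical
  have : univ.filter P = univ.image e := by
    ext p
    simp [← hrange]
  rw [this, sum_image fun i _ j _ h => he h]

section ArtinSchreier

variable {F : Type*} [Field F] [Fintype F] [CharP F 2] [DecidableEq F]

theorem filter_sq_add_self_eq_s4 {b₀ c : F} (h : b₀ ^ 2 + b₀ = c) :
    univ.filter (fun b => b ^ 2 + b = c) = {b₀, b₀ + 1} := by
  ext b
  simp [sq_add_self_eq_iff_s4 h]

theorem card_filter_sq_add_self_eq_le (c : F) :
    #(univ.filter fun b : F => b ^ 2 + b = c) ≤ 2 := by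
  by_cases h : ∃ b₀ : F, b₀ ^ 2 + b₀ = c
  · obtain ⟨b₀, hb₀⟩ := h
    rw [filter_sq_add_self_eq_s4 hb₀]
    exact card_le_two
  · simp only [not_exists] at h
    simp [filter_false_of_mem fun b _ => h b]

theorem sum_filter_sq_add_self_eq {M : Type*} [AddCommMonoid M] {f r : F → F}
    (hr : ∀ a, r a ^ 2 + r a = f a) (g : F × F → M) :
    ∑ p ∈ univ.filter (fun p : F × F => p.2 ^ 2 + p.2 = f p.1), g p =
      ∑ a, (g (a, r a) + g (a, r a + 1)) := by
  rw [sum_filter, Fintype.sum_prod_type]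
  refine sum_congr rfl fun a _ => ?_
  have hne : r a ≠ r a + 1 := by simp
  rw [← sum_filter, filter_sq_add_self_eq_s4 (hr a), sum_pair hne]

theorem exists_sq_add_self_eq_of_card_filter {f : F → F}
    (hcard : #(univ.filter fun p : F × F => p.2 ^ 2 + p.2 = f p.1) = 2 * Fintype.card F)
    (a : F) : ∃ b, b ^ 2 + b = f a := by
  have hsum : ∑ a : F, #(univ.filter fun b : F => b ^ 2 + b = f a) = ∑ _a : F, 2 := by
    rw [sum_const, card_univ, smul_eq_mul, mul_comm, ← hcard, card_filter, Fintype.sum_prod_type]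
    simp only [card_filter]
  have ha := (sum_eq_sum_iff_of_le fun a _ => card_filter_sq_add_self_eq_le (f a)).mp hsum a
    (mem_univ a)
  obtain ⟨b, hb⟩ := card_pos.mp (by omega : 0 < #(univ.filter fun b : F => b ^ 2 + b = f a))
  exact ⟨b, (mem_filter.mp hb).2⟩

end ArtinSchreier

theorem sum_monomial_mul_monomial_pow_eq_zero {F : Type*} [Field F] [Fintype F] [CharP F 2]
    {s q : ℕ} (hq : q = 2 ^ s) (hF : Fintype.card F = q ^ 2) {r : F → F}
    (hr : ∀ a, r a ^ 2 + r a = a ^ (q + 1)) {m i j i' j' : ℕ} (hm : m ≤ 2 * q - 2)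
    (hj : j ≤ 1) (hj' : j' ≤ 1) (hw : 2 * i + (q + 1) * j ≤ m)
    (hw' : 2 * i' + (q + 1) * j' ≤ m) :
    ∑ a, ((a ^ i * r a ^ j) * (a ^ i' * r a ^ j') ^ q +
      (a ^ i * (r a + 1) ^ j) * (a ^ i' * (r a + 1) ^ j') ^ q) = 0 := by
  have hpow (N : ℕ) (hN : N + 2 ≤ q ^ 2) : ∑ a : F, a ^ N = 0 :=
    FiniteField.sum_pow_lt_card_sub_one F N (by omega)
  have hfiber (a : F) : (a ^ i * r a ^ j) * (a ^ i' * r a ^ j') ^ q +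
      (a ^ i * (r a + 1) ^ j) * (a ^ i' * (r a + 1) ^ j') ^ q =
      a ^ (i + q * i') *
        if j = j' then j * (1 + ∑ t ∈ range s, (a ^ (q + 1)) ^ 2 ^ t) else 1 := by
    rw [← pow_mul_pow_two_pow_add_eq (hr a) s hj hj', ← hq]
    ring
  simp only [hfiber]
  split_ifs with hjj
  · subst hjj
    obtain rfl | rfl : j = 0 ∨ j = 1 := by omega
    · simp
    · have hi : 2 * i + 3 ≤ q := by omega
      have hi' : 2 * i' + 3 ≤ q := by omega
      have hdeg (t : ℕ) (ht : t < s) : i + q * i' + (q + 1) * 2 ^ t + 2 ≤ q ^ 2 := by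
        have : 2 * 2 ^ t ≤ q := hq ▸ pow_succ' 2 t ▸ Nat.pow_le_pow_right two_pos ht
        nlinarith
      simp only [Nat.cast_one, one_mul, mul_add, mul_one, mul_sum, ← pow_mul, ← pow_add,
        sum_add_distrib]
      rw [sum_comm, hpow _ (by nlinarith), zero_add]
      exact sum_eq_zero fun t ht => hpow _ (hdeg t (mem_range.mp ht))
  · simp only [mul_one]
    apply hpow
    obtain ⟨rfl, rfl⟩ | ⟨rfl, rfl⟩ : j = 0 ∧ j' = 1 ∨ j = 1 ∧ j' = 0 := by omega
    · have hi : i + 1 ≤ q := by omega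
      have hi' : 2 * i' + 3 ≤ q := by omega
      nlinarith
    · have hi : 2 * i + 3 ≤ q := by omega
      have hi' : i' + 1 ≤ q := by omega
      nlinarith

theorem first_curve_hermitian_self_orthogonal_general (s : ℕ) (q : ℕ) (hq : q = 2 ^ s)
    (F : Type) [Field F] [Fintype F] (hF : Fintype.card F = q ^ 2)
    (n : ℕ) (hn : n = 2 * q ^ 2)
    (pt : Fin n → F × F) (hinj : Function.Injective pt)
    (hrange : ∀ p : F × F, p ∈ Set.range pt ↔ p.2 ^ 2 + p.2 = p.1 ^ (q + 1))
    (C : ℕ → Submodule F (Fin n → F))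
    (hC : ∀ m : ℕ, C m = Submodule.span F
      {v : Fin n → F | ∃ i j : ℕ, j ≤ 1 ∧ 2 * i + (q + 1) * j ≤ m ∧
        v = fun k => (pt k).1 ^ i * (pt k).2 ^ j})
    (m : ℕ) (hm : m ≤ 2 * q - 2) :
    ∀ u ∈ C m, ∀ v ∈ C m, ∑ k, u k * (v k) ^ q = 0 := by
  classical
  subst hq
  have : CharP F 2 := charP_of_card_eq_prime_pow (f := s * 2) (by rw [hF, pow_mul])
  have hcard : #(univ.filter fun p : F × F => p.2 ^ 2 + p.2 = p.1 ^ (2 ^ s + 1)) =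
      2 * Fintype.card F := by
    have hsum := sum_comp_eq_sum_filter_of_injective hinj hrange fun _ => 1
    rw [sum_const, sum_const, card_univ, Fintype.card_fin] at hsum
    simpa [hn, hF] using hsum.symm
  choose r hr using exists_sq_add_self_eq_of_card_filter (f := fun a => a ^ (2 ^ s + 1)) hcard
  intro u hu v hv
  rw [hC] at hu hv
  refine sum_mul_map_eq_zero_of_mem_span (iterateFrobenius F 2 s) ?_ hu hv
  rintro _ ⟨i, j, hj, hw, rfl⟩ _ ⟨i', j', hj', hw', rfl⟩
  rw [sum_comp_eq_sum_filter_of_injective hinj hrange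
    fun p => p.1 ^ i * p.2 ^ j * iterateFrobenius F 2 s (p.1 ^ i' * p.2 ^ j'),
    sum_filter_sq_add_self_eq hr]
  exact sum_monomial_mul_monomial_pow_eq_zero rfl hF hr hm hj hj' hw hw'

theorem first_curve_hermitian_self_orthogonal (s : ℕ) (hs : 0 < s) (q : ℕ) (hq : q = 2 ^ s)
    (F : Type) [Field F] [Fintype F] (hF : Fintype.card F = q ^ 2)
    (n : ℕ) (hn : n = 2 * q ^ 2)
    (pt : Fin n → F × F) (hinj : Function.Injective pt)
    (hrange : ∀ p : F × F, p ∈ Set.range pt ↔ p.2 ^ 2 + p.2 = p.1 ^ (q + 1))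
    (C : ℕ → Submodule F (Fin n → F))
    (hC : ∀ m : ℕ, C m = Submodule.span F
      {v : Fin n → F | ∃ i j : ℕ, j ≤ 1 ∧ 2 * i + (q + 1) * j ≤ m ∧
        v = fun k => (pt k).1 ^ i * (pt k).2 ^ j})
    (m : ℕ) (hm : m ≤ 2 * q - 2) :
    ∀ u ∈ C m, ∀ v ∈ C m, ∑ k, u k * (v k) ^ q = 0 :=
  first_curve_hermitian_self_orthogonal_general s q hq F hF n hn pt hinj hrange C hC m hm
end

section
/- Let q = 2^s, F = 𝔽_{q²}, n = 2q², and let (a₁,b₁),…,(a_n,b_n) be an enumeration of all pairs in F × F with b_k² + b_k = a_k^{q+1}. For a nonnegative integer m let C_m ⊆ F^n be the F-linear span of the vectors ((a_k)^i (b_k)^j)_{k=1,…,n} over all pairs (i,j) of nonnegative integers with j ≤ 1 and 2i + (q+1)j ≤ m. Then for every codeword c ∈ C_m, the componentwise q-th power ((c₁)^q, …, (c_n)^q) belongs to C_{mq}. -/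
theorem first_curve_frobenius_power (s : ℕ) (hs : 0 < s) (q : ℕ) (hq : q = 2 ^ s)
    (F : Type) [Field F] [Fintype F] (hF : Fintype.card F = q ^ 2)
    (n : ℕ) (hn : n = 2 * q ^ 2)
    (pt : Fin n → F × F) (hinj : Function.Injective pt)
    (hrange : ∀ p : F × F, p ∈ Set.range pt ↔ p.2 ^ 2 + p.2 = p.1 ^ (q + 1))
    (C : ℕ → Submodule F (Fin n → F))
    (hC : ∀ m : ℕ, C m = Submodule.span F
      {v : Fin n → F | ∃ i j : ℕ, j ≤ 1 ∧ 2 * i + (q + 1) * j ≤ m ∧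
        v = fun k => (pt k).1 ^ i * (pt k).2 ^ j})
    (m : ℕ) :
    ∀ c ∈ C m, (fun k => (c k) ^ q) ∈ C (m * q) := by
  -- characteristic 2
  haveI hchar : CharP F 2 := by
    have h := FiniteField.cast_card_eq_zero F
    rw [hF, hq, ← pow_mul] at h
    push_cast at h
    have hdvd : ringChar F ∣ 2 ^ (s * 2) := ringChar.dvd (by exact_mod_cast h)
    haveI := ringChar.charP F
    have hp : (ringChar F).Prime := CharP.char_is_prime F _
    have h2 : ringChar F = 2 :=
      (Nat.prime_dvd_prime_iff_eq hp Nat.prime_two).mp (hp.dvd_of_dvd_pow hdvd)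
    exact h2 ▸ ringChar.charP F
  haveI : Fact (Nat.Prime 2) := ⟨Nat.prime_two⟩
  have hq1 : 1 ≤ q := by rw [hq]; exact Nat.one_le_two_pow
  -- curve relation at each point
  have hcurve : ∀ k : Fin n, (pt k).2 ^ 2 + (pt k).2 = (pt k).1 ^ (q + 1) := fun k =>
    (hrange (pt k)).mp ⟨k, rfl⟩
  -- Frobenius power of the y-coordinate
  have hb : ∀ k : Fin n, ∀ t : ℕ, (pt k).2 ^ 2 ^ t
      = (pt k).2 + ∑ u ∈ Finset.range t, (pt k).1 ^ (2 ^ u * (q + 1)) := by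
    intro k t
    induction t with
    | zero => simp
    | succ t ih =>
      have hsq : (pt k).2 ^ 2 ^ (t + 1) = ((pt k).2 ^ 2 ^ t) ^ 2 := by
        rw [← pow_mul, pow_succ]
      have hb2 : (pt k).2 ^ 2 = (pt k).1 ^ (q + 1) + (pt k).2 := by
        have h2 : (2 : F) = 0 := CharTwo.two_eq_zero
        linear_combination hcurve k - (pt k).2 * h2
      rw [hsq, ih, CharTwo.add_sq, CharTwo.sum_sq, hb2, Finset.sum_range_succ']
      have : ∀ u, ((pt k).1 ^ (2 ^ u * (q + 1))) ^ 2 = (pt k).1 ^ (2 ^ (u + 1) * (q + 1)) := by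
        intro u; rw [← pow_mul]; ring_nf
      simp only [this, pow_zero, one_mul]
      ring
  -- main argument by span induction
  intro c hc
  rw [hC] at hc
  rw [hC (m * q)]
  induction hc using Submodule.span_induction with
  | mem v hv =>
    obtain ⟨i, j, hj, hm, rfl⟩ := hv
    interval_cases j
    · -- j = 0
      apply Submodule.subset_span
      refine ⟨i * q, 0, le_refl 0 |>.trans zero_le_one, by nlinarith, ?_⟩
      funext k
      simp [mul_pow, ← pow_mul]
    · -- j = 1
      have key : (fun k => ((pt k).1 ^ i * (pt k).2 ^ 1) ^ q)
          = (fun k => (pt k).1 ^ (i * q) * (pt k).2 ^ 1)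
            + ∑ u ∈ Finset.range s, (fun k => (pt k).1 ^ (i * q + 2 ^ u * (q + 1)) * (pt k).2 ^ 0) := by
        funext k
        have : (pt k).2 ^ q = (pt k).2 + ∑ u ∈ Finset.range s, (pt k).1 ^ (2 ^ u * (q + 1)) := by
          have h := hb k s; rw [← hq] at h; exact h
        simp only [Pi.add_apply, Finset.sum_apply, pow_one, pow_zero, mul_one, mul_pow,
          ← pow_mul, this, mul_add, Finset.mul_sum, pow_add]
      rw [key]
      apply Submodule.add_mem
      · apply Submodule.subset_span
        refine ⟨i * q, 1, le_refl 1, ?_, rfl⟩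
        nlinarith
      · apply Submodule.sum_mem
        intro u hu
        apply Submodule.subset_span
        refine ⟨i * q + 2 ^ u * (q + 1), 0, zero_le_one, ?_, rfl⟩
        have hus : u + 1 ≤ s := Finset.mem_range.mp hu
        have : 2 ^ (u + 1) ≤ q := by rw [hq]; exact Nat.pow_le_pow_right (by norm_num) hus
        have h2u : 2 * 2 ^ u ≤ q := by rw [← pow_succ']; exact this
        nlinarith
  | zero =>
    have : (fun k : Fin n => (0 : F) ^ q) = 0 := by
      funext k; exact zero_pow (by omega)
    rw [show (fun k : Fin n => ((0 : Fin n → F) k) ^ q) = 0 from this]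
    exact Submodule.zero_mem _
  | add x y hx hy ihx ihy =>
    have : (fun k => ((x + y) k) ^ q) = (fun k => (x k) ^ q) + (fun k => (y k) ^ q) := by
      funext k
      simp only [Pi.add_apply, hq]
      exact add_pow_char_pow (x k) (y k) 2 s
    rw [this]; exact Submodule.add_mem _ ihx ihy
  | smul r x hx ihx =>
    have : (fun k => ((r • x) k) ^ q) = r ^ q • (fun k => (x k) ^ q) := by
      funext k
      simp [mul_pow]
    rw [this]; exact Submodule.smul_mem _ _ ihx
end

section
/- Let q = 2^s, F = 𝔽_{q²}, n = 2q², and let (a₁,b₁),…,(a_n,b_n) be an enumeration of all pairs in F × F with b_k² + b_k = a_k^{q+1}. For a nonnegative integer m let C_m ⊆ F^n be the F-linear span of the vectors ((a_k)^i (b_k)^j)_{k=1,…,n} over all pairs (i,j) of nonnegative integers with j ≤ 1 and 2i + (q+1)j ≤ m. If q − 2 < m < 2q², then the dimension of C_m as an F-vector space equals m − q/2 + 1. -/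
/-!
A combination `f₀(x) + f₁(x) y` with `deg fᵢ < q²` that vanishes at every affine point is zero.
Indeed the curve has exactly two points over every `a ∈ 𝔽_{q²}`: at most two because `y² + y = c`
is quadratic, and `2q²` in total. Two distinct `b` with `f₀(a) + f₁(a) b = 0` force
`f₀(a) = f₁(a) = 0`, and a polynomial of degree `< q²` vanishing on all of `𝔽_{q²}` is zero.
Since `m < 2q²`, the monomials spanning `C_m` are thus linearly independent, and there are
`⌊m/2⌋ + 1 + ⌊(m + 1 - q)/2⌋ = m - q/2 + 1` of them when `q` is even and `m ≥ q - 1`.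
-/

open Finset Polynomial

section CurvePoints

variable {F : Type*} [Field F]

theorem eq_or_eq_neg_sub_one_of_sq_add_self_eq {b b₀ c : F} (hb : b ^ 2 + b = c)
    (hb₀ : b₀ ^ 2 + b₀ = c) : b = b₀ ∨ b = -b₀ - 1 := by
  have : (b - b₀) * (b + b₀ + 1) = 0 := by linear_combination hb - hb₀
  rcases mul_eq_zero.mp this with h | h
  · exact Or.inl (sub_eq_zero.mp h)
  · exact Or.inr (by linear_combination h)

variable [Fintype F] [DecidableEq F]

def curvePoints (h : F → F) : Finset (F × F) := {p | p.2 ^ 2 + p.2 = h p.1}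

theorem card_filter_curvePoints_fst_eq_le_two (h : F → F) (a : F) :
    #{p ∈ curvePoints h | p.1 = a} ≤ 2 := by
  rcases eq_empty_or_nonempty {p ∈ curvePoints h | p.1 = a} with hempty | ⟨⟨a₀, b₀⟩, hp₀⟩
  · simp [hempty]
  refine (card_le_card fun p hp => ?_).trans (card_le_two (a := (a, b₀)) (b := (a, -b₀ - 1)))
  obtain ⟨a', b⟩ := p
  simp only [curvePoints, mem_filter, mem_univ, true_and] at hp hp₀
  obtain ⟨hb, rfl⟩ := hp
  obtain ⟨hb₀, rfl⟩ := hp₀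
  rcases eq_or_eq_neg_sub_one_of_sq_add_self_eq hb hb₀ with rfl | rfl <;> simp

theorem exists_ne_of_card_curvePoints_eq (h : F → F)
    (hcard : #(curvePoints h) = 2 * Fintype.card F) (a : F) :
    ∃ b₁ b₂, b₁ ≠ b₂ ∧ b₁ ^ 2 + b₁ = h a ∧ b₂ ^ 2 + b₂ = h a := by
  have hfibers : ∀ a ∈ (univ : Finset F), #{p ∈ curvePoints h | p.1 = a} = 2 := by
    refine (sum_eq_sum_iff_of_le fun a _ => card_filter_curvePoints_fst_eq_le_two h a).mp ?_
    rw [← card_eq_sum_card_fiberwise fun p _ => mem_univ p.1, hcard, sum_const, card_univ,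
      smul_eq_mul, mul_comm]
  obtain ⟨p₁, p₂, hne, hfiber⟩ := card_eq_two.mp (hfibers a (mem_univ a))
  have hp₁ : p₁ ∈ {p ∈ curvePoints h | p.1 = a} := hfiber ▸ mem_insert_self _ _
  have hp₂ : p₂ ∈ {p ∈ curvePoints h | p.1 = a} := hfiber ▸ mem_insert_of_mem (mem_singleton_self _)
  simp only [curvePoints, mem_filter, mem_univ, true_and] at hp₁ hp₂
  refine ⟨p₁.2, p₂.2, fun h₁₂ => hne (Prod.ext (hp₁.2.trans hp₂.2.symm) h₁₂), ?_, ?_⟩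
  · rw [← hp₁.2]; exact hp₁.1
  · rw [← hp₂.2]; exact hp₂.1

end CurvePoints

section LinearIndependence

variable {F : Type*} [Field F] [Fintype F]

theorem eq_zero_of_sum_mul_pow_eq_zero {c : ℕ → F}
    (hc : ∀ a : F, ∑ i ∈ range (Fintype.card F), c i * a ^ i = 0) {i : ℕ}
    (hi : i < Fintype.card F) : c i = 0 := by
  set f : F[X] := ∑ i ∈ range (Fintype.card F), C (c i) * X ^ i
  have hf : f = 0 := by
    refine eq_zero_of_natDegree_lt_card_of_eval_eq_zero' f univ
      (fun a _ => by simpa [f, eval_finsetSum] using hc a) ?_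
    have hle : f.natDegree ≤ Fintype.card F - 1 := natDegree_sum_le_of_forall_le _ _ fun j hj =>
      (natDegree_C_mul_X_pow_le _ _).trans (by rw [mem_range] at hj; omega)
    have hpos := Fintype.card_pos (α := F)
    rw [card_univ]
    omega
  simpa [f, finsetSum_coeff, coeff_C_mul_X_pow, hi] using congr_arg (coeff · i) hf

theorem linearIndepOn_monomial_eval {ι : Type*} (pt : ι → F × F)
    (hfib : ∀ a, ∃ b₁ b₂, b₁ ≠ b₂ ∧ (a, b₁) ∈ Set.range pt ∧ (a, b₂) ∈ Set.range pt) :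
    LinearIndepOn F (fun (e : ℕ × ℕ) k => (pt k).1 ^ e.1 * (pt k).2 ^ e.2)
      ↑(range (Fintype.card F) ×ˢ range 2) := by
  rw [linearIndepOn_finset_iff]
  intro g hg
  set N := Fintype.card F
  have hpoint : ∀ k, ∑ i ∈ range N, g (i, 0) * (pt k).1 ^ i +
      (∑ i ∈ range N, g (i, 1) * (pt k).1 ^ i) * (pt k).2 = 0 := by
    intro k
    have hk := congr_fun hg k
    simp only [sum_product, sum_range_succ, range_zero, sum_empty, Finset.sum_apply, Pi.smul_apply,
      smul_eq_mul, pow_zero, pow_one, mul_one, zero_add, sum_add_distrib, Pi.zero_apply] at hk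
    rw [sum_mul]
    simpa only [mul_assoc] using hk
  have hvanish : ∀ a, ∑ i ∈ range N, g (i, 0) * a ^ i = 0 ∧
      ∑ i ∈ range N, g (i, 1) * a ^ i = 0 := by
    intro a
    obtain ⟨b₁, b₂, hne, ⟨k₁, hk₁⟩, ⟨k₂, hk₂⟩⟩ := hfib a
    have h₁ := hpoint k₁
    have h₂ := hpoint k₂
    rw [hk₁] at h₁
    rw [hk₂] at h₂
    have hy : ∑ i ∈ range N, g (i, 1) * a ^ i = 0 := by
      refine (mul_eq_zero.mp (?_ : _ * (b₁ - b₂) = 0)).resolve_right (sub_ne_zero.mpr hne)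
      linear_combination h₁ - h₂
    refine ⟨?_, hy⟩
    simpa [hy] using h₁
  rintro ⟨i, j⟩ hij
  rw [mem_product, mem_range, mem_range] at hij
  obtain ⟨hi, hj⟩ := hij
  interval_cases j
  · exact eq_zero_of_sum_mul_pow_eq_zero (fun a => (hvanish a).1) hi
  · exact eq_zero_of_sum_mul_pow_eq_zero (fun a => (hvanish a).2) hi

end LinearIndependence

section PoleOrder

-- `x` and `y` have pole orders `2` and `q + 1` at the point at infinity.
def poleBoundedExponents (q m : ℕ) : Finset (ℕ × ℕ) :=
  range (m / 2 + 1) ×ˢ {0} ∪ range ((m + 1 - q) / 2) ×ˢ {1}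

variable {q m : ℕ}

theorem mem_poleBoundedExponents {i j : ℕ} :
    (i, j) ∈ poleBoundedExponents q m ↔ j ≤ 1 ∧ 2 * i + (q + 1) * j ≤ m := by
  simp only [poleBoundedExponents, mem_union, mem_product, mem_range, mem_singleton]
  constructor
  · rintro (⟨hi, rfl⟩ | ⟨hi, rfl⟩) <;> omega
  · rintro ⟨hj, hm⟩
    interval_cases j <;> omega

theorem card_poleBoundedExponents :
    #(poleBoundedExponents q m) = m / 2 + 1 + (m + 1 - q) / 2 := by
  rw [poleBoundedExponents, card_union_of_disjoint, card_product, card_product, card_range,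
    card_range, card_singleton, card_singleton, mul_one, mul_one]
  exact disjoint_product.mpr (Or.inr (by simp))

theorem poleBoundedExponents_subset_range {N : ℕ} (hm : m / 2 < N) :
    poleBoundedExponents q m ⊆ range N ×ˢ range 2 := by
  rintro ⟨i, j⟩ hij
  rw [mem_poleBoundedExponents] at hij
  rw [mem_product, mem_range, mem_range]
  constructor <;> omega

end PoleOrder

theorem first_curve_dimension (s : ℕ) (hs : 0 < s) (q : ℕ) (hq : q = 2 ^ s)
    (F : Type) [Field F] [Fintype F] (hF : Fintype.card F = q ^ 2)
    (n : ℕ) (hn : n = 2 * q ^ 2)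
    (pt : Fin n → F × F) (hinj : Function.Injective pt)
    (hrange : ∀ p : F × F, p ∈ Set.range pt ↔ p.2 ^ 2 + p.2 = p.1 ^ (q + 1))
    (C : ℕ → Submodule F (Fin n → F))
    (hC : ∀ m : ℕ, C m = Submodule.span F
      {v : Fin n → F | ∃ i j : ℕ, j ≤ 1 ∧ 2 * i + (q + 1) * j ≤ m ∧
        v = fun k => (pt k).1 ^ i * (pt k).2 ^ j})
    (m : ℕ) (hm1 : q - 2 < m) (hm2 : m < 2 * q ^ 2) :
    Module.finrank F (C m) = m - q / 2 + 1 := by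
  classical
  have hcurve : curvePoints (fun a : F => a ^ (q + 1)) = univ.image pt := by
    ext p
    simp [curvePoints, ← hrange p]
  have hfib (a : F) : ∃ b₁ b₂, b₁ ≠ b₂ ∧ (a, b₁) ∈ Set.range pt ∧ (a, b₂) ∈ Set.range pt := by
    obtain ⟨b₁, b₂, hne, h₁, h₂⟩ := exists_ne_of_card_curvePoints_eq _ (by
      rw [hcurve, card_image_of_injective _ hinj, card_univ, Fintype.card_fin, hn, hF]) a
    exact ⟨b₁, b₂, hne, (hrange _).2 h₁, (hrange _).2 h₂⟩
  have hindep := (linearIndepOn_monomial_eval pt hfib).mono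
    (poleBoundedExponents_subset_range (q := q) (m := m) (by rw [hF]; omega))
  have hgens : {v : Fin n → F | ∃ i j : ℕ, j ≤ 1 ∧ 2 * i + (q + 1) * j ≤ m ∧
      v = fun k => (pt k).1 ^ i * (pt k).2 ^ j} =
      (fun (e : ℕ × ℕ) k => (pt k).1 ^ e.1 * (pt k).2 ^ e.2) '' ↑(poleBoundedExponents q m) := by
    ext v
    simp [mem_poleBoundedExponents, eq_comm, and_assoc]
  rw [hC, hgens, Set.image_eq_range, finrank_span_eq_card hindep]
  simp only [coe_sort_coe, Fintype.card_coe, card_poleBoundedExponents]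
  have hq₂ : 2 ≤ q := hq ▸ Nat.le_self_pow hs.ne' 2
  obtain ⟨t, rfl⟩ : 2 ∣ q := hq ▸ dvd_pow_self 2 hs.ne'
  omega
end

section
/- Let q = 2^s, F = 𝔽_{q²}, n = 2q², and let (a₁,b₁),…,(a_n,b_n) be an enumeration of all pairs in F × F with b_k² + b_k = a_k^{q+1}. For a nonnegative integer m let C_m ⊆ F^n be the F-linear span of the vectors ((a_k)^i (b_k)^j)_{k=1,…,n} over all pairs (i,j) of nonnegative integers with j ≤ 1 and 2i + (q+1)j ≤ m. If m < 2q², then every nonzero codeword of C_m has Hamming weight at least 2q² − m. -/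
/-!
A codeword is the evaluation of `f = f₀(x) + f₁(x) y` with `2 deg f₀ ≤ m` and
`q + 1 + 2 deg f₁ ≤ m`. Its norm `N = f₀² - f₀ f₁ - x^(q+1) f₁²` to `F(x)` has degree exactly
`max (2 deg f₀) (q + 1 + 2 deg f₁) ≤ m`, the two candidate leading terms having degrees of different
parity, so `N ≠ 0`. A zero `(a, b)` of the codeword makes `a` a root of `N`; of the (at most two)
points above `a`, both are zeros only if `f₀(a) = f₁(a) = 0`, and then `(x - a)² ∣ N`. Hence the
codeword has at most `deg N ≤ m` zeros.
-/

open Polynomial Finset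

namespace Polynomial

variable {R : Type*} [CommRing R] [IsDomain R]

theorem sum_rootMultiplicity_le_natDegree [DecidableEq R] (p : R[X]) (s : Finset R) :
    ∑ x ∈ s, p.rootMultiplicity x ≤ p.natDegree :=
  calc ∑ x ∈ s, p.rootMultiplicity x = ∑ x ∈ s, p.roots.count x := by simp only [count_roots]
    _ ≤ ∑ x ∈ s ∪ p.roots.toFinset, p.roots.count x := sum_le_sum_of_subset subset_union_left
    _ = Multiset.card p.roots :=
      Multiset.sum_count_eq_card fun x hx => mem_union_right _ (Multiset.mem_toFinset.2 hx)
    _ ≤ p.natDegree := card_roots' p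

theorem card_le_natDegree_of_card_fiber_le [DecidableEq R] {ι : Type*} {p : R[X]}
    (s : Finset ι) (a : ι → R) (h : ∀ x, #{k ∈ s | a k = x} ≤ p.rootMultiplicity x) :
    #s ≤ p.natDegree :=
  calc #s = ∑ x ∈ s.image a, #{k ∈ s | a k = x} := card_eq_sum_card_image a s
    _ ≤ ∑ x ∈ s.image a, p.rootMultiplicity x := sum_le_sum fun x _ => h x
    _ ≤ p.natDegree := sum_rootMultiplicity_le_natDegree p _

end Polynomial

theorem eq_neg_one_sub_of_sq_add_self_eq {R : Type*} [CommRing R] [IsDomain R] {a b b' : R}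
    (hb : b ^ 2 + b = a) (hb' : b' ^ 2 + b' = a) (hne : b ≠ b') : b' = -1 - b := by
  have : (b' - b) * (b' + b + 1) = 0 := by linear_combination hb' - hb
  rcases mul_eq_zero.1 this with h | h
  · exact absurd (sub_eq_zero.1 h).symm hne
  · linear_combination h

section CurveNorm

variable {R : Type*} [CommRing R] {e : ℕ}

/-- The norm of `f₀ + f₁ y` from the function field of `y² + y = xᵉ` down to `R(x)`: its product
with the conjugate `f₀ + f₁ (-1 - y)`. -/
noncomputable def curveNorm (e : ℕ) (f : R[X] × R[X]) : R[X] :=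
  f.1 ^ 2 - f.1 * f.2 - X ^ e * f.2 ^ 2

theorem eval_curveNorm {a b : R} (hb : b ^ 2 + b = a ^ e) (f : R[X] × R[X]) :
    (curveNorm e f).eval a =
      (f.1.eval a + f.2.eval a * b) * (f.1.eval a + f.2.eval a * (-1 - b)) := by
  simp only [curveNorm, eval_sub, eval_mul, eval_pow, eval_X]
  linear_combination f.2.eval a ^ 2 * hb

theorem curveNorm_smul (h : R[X]) (f : R[X] × R[X]) :
    curveNorm e (h • f) = h ^ 2 * curveNorm e f := by
  simp only [curveNorm, Prod.smul_fst, Prod.smul_snd, smul_eq_mul]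
  ring

variable [IsDomain R]

theorem natDegree_curveNorm (he : Odd e) {f : R[X] × R[X]} (hf : f.2 ≠ 0) :
    (curveNorm e f).natDegree = max (2 * f.1.natDegree) (e + 2 * f.2.natDegree) := by
  have h₀ : (f.1 ^ 2).natDegree = 2 * f.1.natDegree := by rw [natDegree_pow]
  have h₁ : (X ^ e * f.2 ^ 2).natDegree = e + 2 * f.2.natDegree := by
    rw [natDegree_mul (pow_ne_zero _ X_ne_zero) (pow_ne_zero _ hf), natDegree_X_pow, natDegree_pow]
  have hmul : (f.1 * f.2).natDegree ≤ f.1.natDegree + f.2.natDegree := natDegree_mul_le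
  have hparity : 2 * f.1.natDegree ≠ e + 2 * f.2.natDegree := by
    obtain ⟨k, rfl⟩ := he
    omega
  rcases hparity.lt_or_gt with hlt | hgt
  · have : (f.1 ^ 2 - f.1 * f.2).natDegree < (X ^ e * f.2 ^ 2).natDegree :=
      (natDegree_sub_le _ _).trans_lt (by rw [h₀, h₁]; omega)
    rw [curveNorm, natDegree_sub_eq_right_of_natDegree_lt this, h₁]
    omega
  · have : (f.1 * f.2 + X ^ e * f.2 ^ 2).natDegree < (f.1 ^ 2).natDegree :=
      (natDegree_add_le _ _).trans_lt (by rw [h₀, h₁]; omega)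
    rw [curveNorm, sub_sub, natDegree_sub_eq_left_of_natDegree_lt this, h₀]
    omega

theorem curveNorm_ne_zero (he : Odd e) {f : R[X] × R[X]} (hf : f ≠ 0) : curveNorm e f ≠ 0 := by
  by_cases hf₂ : f.2 = 0
  · have hf₁ : f.1 ≠ 0 := fun hf₁ => hf (Prod.ext hf₁ hf₂)
    simpa [curveNorm, hf₂] using hf₁
  · refine ne_zero_of_natDegree_gt (n := 0) ?_
    rw [natDegree_curveNorm he hf₂]
    exact lt_max_of_lt_right (by obtain ⟨k, rfl⟩ := he; omega)

theorem natDegree_curveNorm_le (he : Odd e) {m : ℕ} {f : R[X] × R[X]}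
    (h₁ : f.1 ∈ degreeLE R (m / 2 : ℕ)) (h₂ : f.2 ∈ degreeLT R ((m + 2 - e) / 2)) :
    (curveNorm e f).natDegree ≤ m := by
  have d₁ : f.1.natDegree ≤ m / 2 := natDegree_le_iff_degree_le.2 (mem_degreeLE.1 h₁)
  by_cases hf₂ : f.2 = 0
  · simp only [curveNorm, hf₂, mul_zero, sub_zero, zero_pow two_ne_zero, natDegree_pow]
    omega
  · have d₂ := (natDegree_lt_iff_degree_lt hf₂).2 (mem_degreeLT.1 h₂)
    rw [natDegree_curveNorm he hf₂]
    exact max_le (by omega) (by omega)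

end CurveNorm

section CurvePoints

variable {F : Type*} [Field F] {ι : Type*} {e : ℕ}

def curveEval (pt : ι → F × F) : F[X] × F[X] →ₗ[F] ι → F where
  toFun f k := f.1.eval (pt k).1 + f.2.eval (pt k).1 * (pt k).2
  map_add' f g := by ext k; simp only [Prod.fst_add, Prod.snd_add, eval_add, Pi.add_apply]; ring
  map_smul' r f := by
    ext k
    simp only [Prod.smul_fst, Prod.smul_snd, eval_smul, smul_eq_mul, Pi.smul_apply,
      RingHom.id_apply]
    ring

/-- The truncated `(m + 2 - e) / 2` counts the `i` with `2 i + e ≤ m`; it is `0` when `m < e`. -/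
theorem span_le_map_curveEval (pt : ι → F × F) (e m : ℕ) :
    Submodule.span F {v : ι → F | ∃ i j : ℕ, j ≤ 1 ∧ 2 * i + e * j ≤ m ∧
        v = fun k => (pt k).1 ^ i * (pt k).2 ^ j} ≤
      ((degreeLE F (m / 2 : ℕ)).prod (degreeLT F ((m + 2 - e) / 2))).map (curveEval pt) := by
  rw [Submodule.span_le]
  rintro v ⟨i, j, hj, hij, rfl⟩
  interval_cases j
  · refine ⟨(X ^ i, 0), ⟨mem_degreeLE.2 ((degree_X_pow_le i).trans ?_), zero_mem _⟩, ?_⟩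
    · exact_mod_cast (show i ≤ m / 2 by omega)
    · ext k; simp [curveEval]
  · refine ⟨(0, X ^ i), ⟨zero_mem _, mem_degreeLT.2 ((degree_X_pow_le i).trans_lt ?_)⟩, ?_⟩
    · exact_mod_cast (show i < (m + 2 - e) / 2 by omega)
    · ext k; simp [curveEval]

variable {pt : ι → F × F} (hinj : pt.Injective)
  (hcurve : ∀ k, (pt k).2 ^ 2 + (pt k).2 = (pt k).1 ^ e)
include hinj hcurve

theorem snd_eq_neg_one_sub_of_fst_eq {k k' : ι} (hne : k ≠ k') (hfst : (pt k).1 = (pt k').1) :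
    (pt k').2 = -1 - (pt k).2 :=
  eq_neg_one_sub_of_sq_add_self_eq (hcurve k) (hfst ▸ hcurve k')
    fun hsnd => hne (hinj (Prod.ext hfst hsnd))

theorem card_fiber_le_two [DecidableEq F] (s : Finset ι) (x : F) : #{k ∈ s | (pt k).1 = x} ≤ 2 := by
  by_contra! h
  obtain ⟨k₁, hk₁, k₂, hk₂, k₃, hk₃, h₁₂, h₁₃, h₂₃⟩ := two_lt_card.1 h
  simp only [mem_filter] at hk₁ hk₂ hk₃
  have hfst₂ : (pt k₁).1 = (pt k₂).1 := hk₁.2.trans hk₂.2.symm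
  have hfst₃ : (pt k₁).1 = (pt k₃).1 := hk₁.2.trans hk₃.2.symm
  refine h₂₃ (hinj (Prod.ext (hfst₂.symm.trans hfst₃) ?_))
  rw [snd_eq_neg_one_sub_of_fst_eq hinj hcurve h₁₂ hfst₂,
    snd_eq_neg_one_sub_of_fst_eq hinj hcurve h₁₃ hfst₃]

theorem sq_dvd_curveNorm {f : F[X] × F[X]} {k k' : ι} (hne : k ≠ k')
    (hfst : (pt k).1 = (pt k').1) (hk : curveEval pt f k = 0) (hk' : curveEval pt f k' = 0) :
    (X - C (pt k).1) ^ 2 ∣ curveNorm e f := by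
  change f.1.eval (pt k).1 + f.2.eval (pt k).1 * (pt k).2 = 0 at hk
  change f.1.eval (pt k').1 + f.2.eval (pt k').1 * (pt k').2 = 0 at hk'
  have hsnd := snd_eq_neg_one_sub_of_fst_eq hinj hcurve hne hfst
  rw [← hfst, hsnd] at hk'
  have hb : 2 * (pt k).2 + 1 ≠ 0 := fun h =>
    hne (hinj (Prod.ext hfst (by linear_combination h - hsnd)))
  have h₂ : f.2.eval (pt k).1 = 0 := by
    refine (mul_eq_zero.1 ?_).resolve_right hb
    linear_combination hk - hk'
  have h₁ : f.1.eval (pt k).1 = 0 := by linear_combination hk - (pt k).2 * h₂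
  obtain ⟨g₁, hg₁⟩ := dvd_iff_isRoot.2 h₁
  obtain ⟨g₂, hg₂⟩ := dvd_iff_isRoot.2 h₂
  have : f = (X - C (pt k).1) • (g₁, g₂) := Prod.ext hg₁ hg₂
  exact ⟨_, this ▸ curveNorm_smul _ _⟩

theorem card_fiber_zeros_le_rootMultiplicity [DecidableEq F] [Fintype ι] {f : F[X] × F[X]}
    (hf : curveNorm e f ≠ 0) (x : F) :
    #{k ∈ {k | curveEval pt f k = 0} | (pt k).1 = x} ≤ (curveNorm e f).rootMultiplicity x := by
  set Z := ({k | curveEval pt f k = 0} : Finset ι)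
  obtain hle | hlt := le_or_gt #{k ∈ Z | (pt k).1 = x} 1
  · obtain h0 | ⟨k, hk⟩ := {k ∈ Z | (pt k).1 = x}.eq_empty_or_nonempty
    · simp [h0]
    simp only [Z, mem_filter, mem_univ, true_and] at hk
    refine hle.trans ((rootMultiplicity_pos hf).2 ?_)
    rw [← hk.2, IsRoot, eval_curveNorm (hcurve k)]
    exact mul_eq_zero_of_left hk.1 _
  · obtain ⟨k, hk, k', hk', hne⟩ := one_lt_card.1 hlt
    simp only [Z, mem_filter, mem_univ, true_and] at hk hk'
    have hdvd := sq_dvd_curveNorm hinj hcurve hne (hk.2.trans hk'.2.symm) hk.1 hk'.1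
    rw [hk.2] at hdvd
    exact (card_fiber_le_two hinj hcurve Z x).trans ((le_rootMultiplicity_iff hf).2 hdvd)

theorem card_zeros_le_natDegree_curveNorm [DecidableEq F] [Fintype ι] {f : F[X] × F[X]}
    (hf : curveNorm e f ≠ 0) : #{k | curveEval pt f k = 0} ≤ (curveNorm e f).natDegree :=
  card_le_natDegree_of_card_fiber_le _ _ (card_fiber_zeros_le_rootMultiplicity hinj hcurve hf)

end CurvePoints

theorem first_curve_min_distance_general (s : ℕ) (hs : 0 < s) (q : ℕ) (hq : q = 2 ^ s)
    (F : Type) [Field F]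
    (n : ℕ) (hn : n = 2 * q ^ 2)
    (pt : Fin n → F × F) (hinj : Function.Injective pt)
    (hrange : ∀ p : F × F, p ∈ Set.range pt ↔ p.2 ^ 2 + p.2 = p.1 ^ (q + 1))
    (C : ℕ → Submodule F (Fin n → F))
    (hC : ∀ m : ℕ, C m = Submodule.span F
      {v : Fin n → F | ∃ i j : ℕ, j ≤ 1 ∧ 2 * i + (q + 1) * j ≤ m ∧
        v = fun k => (pt k).1 ^ i * (pt k).2 ^ j})
    (m : ℕ) :
    ∀ c ∈ C m, c ≠ 0 → 2 * q ^ 2 - m ≤ Nat.card {k : Fin n // c k ≠ 0} := by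
  classical
  intro c hc hc0
  have he : Odd (q + 1) := (hq ▸ (Nat.even_pow.2 ⟨even_two, hs.ne'⟩)).add_one
  have hcurve (k : Fin n) : (pt k).2 ^ 2 + (pt k).2 = (pt k).1 ^ (q + 1) :=
    (hrange (pt k)).1 ⟨k, rfl⟩
  obtain ⟨f, ⟨hf₁, hf₂⟩, rfl⟩ := span_le_map_curveEval pt (q + 1) m (hC m ▸ hc)
  have hf : f ≠ 0 := by rintro rfl; exact hc0 (map_zero _)
  have hzeros := card_zeros_le_natDegree_curveNorm hinj hcurve (curveNorm_ne_zero he hf)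
  have hdeg := natDegree_curveNorm_le he hf₁ hf₂
  rw [Nat.card_eq_fintype_card, Fintype.card_subtype_compl, Fintype.card_fin,
    Fintype.card_subtype]
  omega

theorem first_curve_min_distance (s : ℕ) (hs : 0 < s) (q : ℕ) (hq : q = 2 ^ s)
    (F : Type) [Field F] [Fintype F] (hF : Fintype.card F = q ^ 2)
    (n : ℕ) (hn : n = 2 * q ^ 2)
    (pt : Fin n → F × F) (hinj : Function.Injective pt)
    (hrange : ∀ p : F × F, p ∈ Set.range pt ↔ p.2 ^ 2 + p.2 = p.1 ^ (q + 1))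
    (C : ℕ → Submodule F (Fin n → F))
    (hC : ∀ m : ℕ, C m = Submodule.span F
      {v : Fin n → F | ∃ i j : ℕ, j ≤ 1 ∧ 2 * i + (q + 1) * j ≤ m ∧
        v = fun k => (pt k).1 ^ i * (pt k).2 ^ j})
    (m : ℕ) (hm : m < 2 * q ^ 2) :
    ∀ c ∈ C m, c ≠ 0 → 2 * q ^ 2 - m ≤ Nat.card {k : Fin n // c k ≠ 0} :=
  first_curve_min_distance_general s hs q hq F n hn pt hinj hrange C hC m
end

section
/- Let q = 2^{2t+1} be an odd power of 2 (so that 3 divides q + 1) and let F = 𝔽_{q²}. Then the number of pairs (a,b) ∈ F × F satisfying b^q + b = a³ is exactly 3q² − 2q. -/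
/-!
When `#F = q²` with `q` a power of the characteristic, `b ↦ b^q + b` is the trace of `F` onto
its subfield `𝔽_q`. It is additive, its kernel and its image lie in root sets of polynomials of
degree `q`, and their sizes multiply to `q²`; so both have exactly `q` elements. Hence
`b^q + b = a³` has `q` solutions `b` when `(a³)^q = a³` and none otherwise. As `3 ∣ q + 1`,
`3(q - 1)` divides `#Fˣ = q² - 1`, so `(a³)^q = a³` holds for `a = 0` and for the `3(q - 1)`
roots of `a^(3(q-1)) = 1`, giving `q (3(q - 1) + 1) = 3q² - 2q` points.
-/

open Finset Polynomial

section RootCounting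

variable {F : Type*} [Field F] [Fintype F]

lemma card_filter_pow_eq_mul_self_le [DecidableEq F] {n : ℕ} (hn : 2 ≤ n) (c : F) :
    #{x : F | x ^ n = c * x} ≤ n := by
  have hmonic : (X ^ n - C c * X : F[X]).Monic :=
    monic_X_pow_sub ((degree_C_mul_X_le c).trans_lt (by exact_mod_cast hn))
  have hdeg : (X ^ n - C c * X : F[X]).natDegree = n := by
    rw [natDegree_sub_eq_left_of_natDegree_lt, natDegree_X_pow]
    rw [natDegree_X_pow]
    exact ((natDegree_C_mul_le c X).trans natDegree_X_le).trans_lt (by omega)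
  rw [← hdeg]
  refine card_le_degree_of_subset_roots fun x hx => ?_
  rw [mem_roots hmonic.ne_zero]
  simp_all

lemma card_filter_pow_eq_self_le [DecidableEq F] {n : ℕ} (hn : 2 ≤ n) :
    #{x : F | x ^ n = x} ≤ n := by
  simpa using card_filter_pow_eq_mul_self_le hn (1 : F)

lemma card_nthRootsFinset_one_of_dvd {d : ℕ} (hd : d ∣ Fintype.card F - 1) :
    #(nthRootsFinset d (1 : F)) = d := by
  obtain ⟨g, hg⟩ := IsCyclic.exists_ofOrder_eq_natCard (α := Fˣ)
  rw [Nat.card_units, Nat.card_eq_fintype_card] at hg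
  have hpos : 0 < Fintype.card F - 1 := Nat.sub_pos_of_lt Fintype.one_lt_card
  obtain ⟨e, he⟩ := hd
  have hζ : IsPrimitiveRoot ((g : F) ^ e) d :=
    (IsPrimitiveRoot.coe_units_iff.2 (hg ▸ IsPrimitiveRoot.orderOf g)).pow hpos
      (he.trans (mul_comm d e))
  exact hζ.card_nthRootsFinset

lemma two_le_of_card_eq_sq {q : ℕ} (hF : Fintype.card F = q ^ 2) : 2 ≤ q := by
  have h := hF ▸ Fintype.one_lt_card (α := F)
  rwa [← one_pow 2, Nat.pow_lt_pow_iff_left two_ne_zero] at h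

lemma card_filter_pow_pow_eq_self [DecidableEq F] {q n : ℕ} (hF : Fintype.card F = q ^ 2)
    (hn : n ∣ q + 1) :
    #{a : F | (a ^ n) ^ q = a ^ n} = n * (q - 1) + 1 := by
  have hq := two_le_of_card_eq_sq hF
  have hn0 : 0 < n := Nat.pos_of_dvd_of_pos hn (by omega)
  have hd : 0 < n * (q - 1) := Nat.mul_pos hn0 (by omega)
  have hdvd : n * (q - 1) ∣ Fintype.card F - 1 := by
    rw [hF, show q ^ 2 - 1 = (q + 1) * (q - 1) by simpa using Nat.sq_sub_sq q 1]
    exact mul_dvd_mul_right hn _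
  have hfilter : ({a | (a ^ n) ^ q = a ^ n} : Finset F) =
      insert 0 (nthRootsFinset (n * (q - 1)) (1 : F)) := by
    ext a
    rcases eq_or_ne a 0 with rfl | ha
    · simp [hn0.ne', show q ≠ 0 by omega]
    · have hsplit : (a ^ n) ^ q = a ^ n * a ^ (n * (q - 1)) := by
        rw [← pow_mul, ← pow_add]
        congr 1
        obtain ⟨r, rfl⟩ : ∃ r, q = r + 1 := ⟨q - 1, by omega⟩
        simp only [Nat.add_sub_cancel]
        ring
      simp [mem_nthRootsFinset hd, ha, hsplit]
  rw [hfilter, card_insert_of_notMem (by simp [mem_nthRootsFinset hd, hd.ne']),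
    card_nthRootsFinset_one_of_dvd hdvd]

end RootCounting

lemma natCard_subtype_prod_eq_sum {α β : Type*} [Fintype α] [Fintype β] (P : α → β → Prop)
    [∀ a b, Decidable (P a b)] :
    Nat.card {x : α × β // P x.1 x.2} = ∑ a, #{b | P a b} := by
  rw [Nat.card_congr (Equiv.subtypeProdEquivSigmaSubtype P), Nat.card_eq_fintype_card,
    Fintype.card_sigma]
  simp only [Fintype.card_subtype]

lemma card_image_mul_card_filter_eq_zero {G M : Type*} [AddGroup G] [Fintype G] [AddMonoid M]
    [DecidableEq M] (f : G →+ M) :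
    #(univ.image f) * #{g | f g = 0} = Fintype.card G := by
  rw [← card_univ, card_eq_sum_card_image f univ, ← smul_eq_mul, ← sum_const]
  refine sum_congr rfl fun c hc => ?_
  obtain ⟨g, -, rfl⟩ := mem_image.1 hc
  exact AddMonoidHom.card_fiber_eq_of_mem_range f ⟨0, map_zero f⟩ ⟨g, rfl⟩

/-- For `#F = q²` and `q = p ^ k`, this is the trace of `F` over its subfield `𝔽_q`. -/
def frobeniusTrace (F : Type*) [CommRing F] (p k : ℕ) [ExpChar F p] : F →+ F :=
  (iterateFrobenius F p k).toAddMonoidHom + AddMonoidHom.id F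

lemma frobeniusTrace_apply {F : Type*} [CommRing F] (p k : ℕ) [ExpChar F p] (b : F) :
    frobeniusTrace F p k b = b ^ p ^ k + b := rfl

section FrobeniusTrace

variable {F : Type*} [Field F] [Fintype F] {p k : ℕ} [ExpChar F p]

lemma frobeniusTrace_pow_self (hF : Fintype.card F = (p ^ k) ^ 2) (b : F) :
    frobeniusTrace F p k b ^ p ^ k = frobeniusTrace F p k b := by
  have hb : (b ^ p ^ k) ^ p ^ k = b := by rw [← pow_mul, ← sq, ← hF, FiniteField.pow_card]
  rw [frobeniusTrace_apply, add_pow_expChar_pow, hb, add_comm]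

variable [DecidableEq F]

lemma image_frobeniusTrace_subset (hF : Fintype.card F = (p ^ k) ^ 2) :
    univ.image (frobeniusTrace F p k) ⊆ ({c | c ^ p ^ k = c} : Finset F) := by
  intro c hc
  obtain ⟨b, -, rfl⟩ := mem_image.1 hc
  simpa using frobeniusTrace_pow_self hF b

lemma card_image_frobeniusTrace_le (hF : Fintype.card F = (p ^ k) ^ 2) :
    #(univ.image (frobeniusTrace F p k)) ≤ p ^ k :=
  (card_le_card (image_frobeniusTrace_subset hF)).trans
    (card_filter_pow_eq_self_le (two_le_of_card_eq_sq hF))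

lemma card_filter_frobeniusTrace_eq_zero_le (hF : Fintype.card F = (p ^ k) ^ 2) :
    #{b : F | frobeniusTrace F p k b = 0} ≤ p ^ k := by
  simpa [frobeniusTrace_apply, add_eq_zero_iff_eq_neg] using
    card_filter_pow_eq_mul_self_le (two_le_of_card_eq_sq hF) (-1 : F)

lemma card_filter_frobeniusTrace_eq_zero (hF : Fintype.card F = (p ^ k) ^ 2) :
    #{b : F | frobeniusTrace F p k b = 0} = p ^ k := by
  have := card_image_mul_card_filter_eq_zero (frobeniusTrace F p k)
  nlinarith [card_image_frobeniusTrace_le hF, card_filter_frobeniusTrace_eq_zero_le hF]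

lemma mem_range_frobeniusTrace (hF : Fintype.card F = (p ^ k) ^ 2) {c : F} :
    c ∈ Set.range (frobeniusTrace F p k) ↔ c ^ p ^ k = c := by
  refine ⟨by rintro ⟨b, rfl⟩; exact frobeniusTrace_pow_self hF b, fun hc => ?_⟩
  have hprod := card_image_mul_card_filter_eq_zero (frobeniusTrace F p k)
  rw [card_filter_frobeniusTrace_eq_zero hF, hF, sq] at hprod
  have himage : univ.image (frobeniusTrace F p k) = ({c | c ^ p ^ k = c} : Finset F) := by
    refine eq_of_subset_of_card_le (image_frobeniusTrace_subset hF) ?_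
    rw [Nat.eq_of_mul_eq_mul_right (by linarith [two_le_of_card_eq_sq hF]) hprod]
    exact card_filter_pow_eq_self_le (two_le_of_card_eq_sq hF)
  have hc' : c ∈ univ.image (frobeniusTrace F p k) := himage ▸ (mem_filter_univ c).2 hc
  simpa using hc'

lemma card_filter_frobeniusTrace_eq (hF : Fintype.card F = (p ^ k) ^ 2) (c : F) :
    #{b : F | frobeniusTrace F p k b = c} = if c ^ p ^ k = c then p ^ k else 0 := by
  split_ifs with hc
  · rw [AddMonoidHom.card_fiber_eq_of_mem_range _ ((mem_range_frobeniusTrace hF).2 hc)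
      ⟨0, map_zero _⟩, card_filter_frobeniusTrace_eq_zero hF]
  · rw [card_eq_zero, filter_eq_empty_iff]
    rintro b - rfl
    exact hc (frobeniusTrace_pow_self hF b)

end FrobeniusTrace

/-- Let `q = 2^(2t+1)` be an odd power of `2` and `F = 𝔽_{q²}`. Then the number of pairs
`(a,b) ∈ F × F` with `b^q + b = a³` is exactly `3q² − 2q`. -/
theorem second_curve_point_count (t : ℕ) (q : ℕ) (hq : q = 2 ^ (2 * t + 1))
    (F : Type) [Field F] [Fintype F] (hF : Fintype.card F = q ^ 2) :
    Nat.card {p : F × F // p.2 ^ q + p.2 = p.1 ^ 3} = 3 * q ^ 2 - 2 * q := by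
  classical
  have : Fact (Nat.Prime 2) := ⟨Nat.prime_two⟩
  have : CharP F 2 := charP_of_card_eq_prime_pow (hF.trans (by rw [hq, ← pow_mul]))
  have h3 : 3 ∣ q + 1 := by
    simpa [← hq] using Odd.nat_add_dvd_pow_add_pow 2 1 (odd_two_mul_add_one t)
  have hq1 : 1 ≤ q := hq ▸ Nat.one_le_two_pow
  calc Nat.card {p : F × F // p.2 ^ q + p.2 = p.1 ^ 3}
      = ∑ a : F, #{b : F | frobeniusTrace F 2 (2 * t + 1) b = a ^ 3} := by
        rw [natCard_subtype_prod_eq_sum fun (a b : F) => b ^ q + b = a ^ 3, hq]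
        rfl
    _ = ∑ a : F, if (a ^ 3) ^ q = a ^ 3 then q else 0 := by
        simp only [card_filter_frobeniusTrace_eq (hq ▸ hF), hq]
    _ = #{a : F | (a ^ 3) ^ q = a ^ 3} * q := by
        rw [sum_ite, sum_const_zero, add_zero, sum_const, smul_eq_mul]
    _ = 3 * q ^ 2 - 2 * q := by
        rw [card_filter_pow_pow_eq_self hF h3]
        zify [hq1, show 2 * q ≤ 3 * q ^ 2 by nlinarith]
        ring
end

section
/- Let q = 2^{2t+1} be an odd power of 2, F = 𝔽_{q²}, and let α be a generator of the multiplicative group F^×. For every integer i with 0 ≤ i < q² − 1, there exists b ∈ F with b^q + b = α^{3i} if and only if (q+1)/3 divides i. -/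
/-- Let `q = 2^(2t+1)` be an odd power of `2`, `F = 𝔽_{q²}` and `α` a generator of `F^×`.
For `0 ≤ i < q² − 1` there exists `b ∈ F` with `b^q + b = α^(3i)` if and only if
`(q+1)/3` divides `i`. -/
theorem second_curve_split_condition (t : ℕ) (q : ℕ) (hq : q = 2 ^ (2 * t + 1))
    (F : Type) [Field F] [Fintype F] (hF : Fintype.card F = q ^ 2)
    (α : F) (hα : ∀ x : F, x ≠ 0 → ∃ k : ℕ, x = α ^ k)
    (i : ℕ) (hi : i < q ^ 2 - 1) :
    (∃ b : F, b ^ q + b = α ^ (3 * i)) ↔ (q + 1) / 3 ∣ i := by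
  classical
  -- basic numerics
  have hq2 : 2 ≤ q := by
    rw [hq]
    calc 2 = 2 ^ 1 := rfl
    _ ≤ 2 ^ (2 * t + 1) := Nat.pow_le_pow_right (by norm_num) (by omega)
  have h4 : ∀ n : ℕ, 4 ^ n % 3 = 1 := by
    intro n; induction n with
    | zero => rfl
    | succ k ih => rw [pow_succ]; omega
  have h3 : 3 ∣ q + 1 := by
    have h2 : q = 4 ^ t * 2 := by
      rw [hq, pow_succ, pow_mul]; norm_num
    have := h4 t; omega
  set m : ℕ := (q + 1) / 3 with hm_def
  have hm : q + 1 = 3 * m := by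
    rw [hm_def]; omega
  have hfac : (q + 1) * (q - 1) = q ^ 2 - 1 := by
    rcases Nat.exists_eq_add_of_le hq2 with ⟨r, rfl⟩
    have h1 : (2 + r) ^ 2 = r ^ 2 + 4 * r + 4 := by ring
    have h2 : (2 + r + 1) * (2 + r - 1) = r ^ 2 + 4 * r + 3 := by
      have h3 : 2 + r - 1 = r + 1 := by omega
      rw [h3]; ring
    omega
  -- characteristic 2
  obtain ⟨p, hp⟩ := CharP.exists F
  haveI := hp
  have hpprime : p.Prime := CharP.char_is_prime F p
  have hp2 : p = 2 := by
    obtain ⟨n, -, hcard⟩ := FiniteField.card F p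
    have hpd : p ∣ Fintype.card F := hcard ▸ dvd_pow_self p n.ne_zero
    rw [hF, hq, ← pow_mul] at hpd
    have := hpprime.dvd_of_dvd_pow (n := (2 * t + 1) * 2) (by exact_mod_cast hpd)
    exact (Nat.prime_dvd_prime_iff_eq hpprime Nat.prime_two).mp this
  subst hp2
  haveI : CharP F 2 := hp
  haveI : Fact (Nat.Prime 2) := ⟨Nat.prime_two⟩
  have hfrob : ∀ a b : F, (a + b) ^ q = a ^ q + b ^ q := by
    intro a b; rw [hq]; exact add_pow_char_pow a b 2 (2 * t + 1)
  -- α is nonzero, of order q^2 - 1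
  have hα0 : α ≠ 0 := by
    intro h0
    have hall : ∀ x : F, x = 0 ∨ x = 1 := by
      intro x
      by_cases hx : x = 0
      · exact Or.inl hx
      · obtain ⟨k, hk⟩ := hα x hx
        rcases Nat.eq_zero_or_pos k with hk0 | hk0
        · right; rw [hk, hk0, pow_zero]
        · exfalso; apply hx; rw [hk, h0, zero_pow hk0.ne']
    have hsub : (Finset.univ : Finset F) ⊆ {0, 1} := fun x _ => by
      rcases hall x with h | h <;> simp [h]
    have hle := Finset.card_le_card hsub
    rw [Finset.card_univ, hF] at hle
    have hle2 : q ^ 2 ≤ 2 := hle.trans ((Finset.card_insert_le 0 {1}).trans (by simp))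
    nlinarith
  have horder : orderOf α = q ^ 2 - 1 := by
    set u : Fˣ := Units.mk0 α hα0 with hu
    have hmem : ∀ x : Fˣ, x ∈ Subgroup.zpowers u := by
      intro x
      obtain ⟨k, hk⟩ := hα x.val x.ne_zero
      refine ⟨(k : ℤ), Units.ext ?_⟩
      show ((u ^ (k : ℤ) : Fˣ) : F) = (x : F)
      rw [zpow_natCast, Units.val_pow_eq_pow_val, hu, Units.val_mk0]
      exact hk.symm
    have h1 : orderOf u = Nat.card Fˣ := orderOf_eq_card_of_forall_mem_zpowers hmem
    have h2 : Nat.card Fˣ = q ^ 2 - 1 := by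
      rw [Nat.card_eq_fintype_card, Fintype.card_units, hF]
    have h3' : orderOf ((u : F)) = orderOf u := orderOf_units
    rw [show α = (u : F) from rfl, h3', h1, h2]
  have hpow1 : α ^ (q ^ 2 - 1) = 1 := by
    rw [← hF]; exact FiniteField.pow_card_sub_one_eq_one α hα0
  -- the additive map b ↦ b^q + b
  obtain ⟨φ, hφapp⟩ : ∃ φ : F →+ F, ∀ b : F, φ b = b ^ q + b :=
    ⟨AddMonoidHom.mk' (fun b => b ^ q + b) (fun a b => by
      simp only [hfrob]; ring), fun b => rfl⟩
  -- root-counting bound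
  have hT : ({y : F | y ^ q + y = 0}).ncard ≤ q := by
    set P : Polynomial F := Polynomial.X ^ q + Polynomial.X with hP
    have hPne : P ≠ 0 := by
      intro h
      have hc : P.coeff q = 1 := by
        rw [hP, Polynomial.coeff_add, Polynomial.coeff_X_pow, Polynomial.coeff_X]
        simp [show ¬ (1:ℕ) = q by omega, show ¬ q = 1 by omega]
      rw [h] at hc; simp at hc
    have hsub : {y : F | y ^ q + y = 0} ⊆ (P.roots.toFinset : Set F) := by
      intro y hy
      simp only [Finset.coe_sort_coe, Multiset.mem_toFinset, Finset.mem_coe]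
      rw [Polynomial.mem_roots hPne]
      rw [hP]; simp [Polynomial.IsRoot]
      exact hy
    calc ({y : F | y ^ q + y = 0}).ncard ≤ ((P.roots.toFinset : Finset F) : Set F).ncard :=
          Set.ncard_le_ncard hsub (Finset.finite_toSet _)
      _ = P.roots.toFinset.card := Set.ncard_coe_finset _
      _ ≤ Multiset.card P.roots := Multiset.toFinset_card_le _
      _ ≤ P.natDegree := Polynomial.card_roots' P
      _ ≤ q := by
          rw [hP]
          refine (Polynomial.natDegree_add_le _ _).trans ?_
          simp [Polynomial.natDegree_X_pow, Polynomial.natDegree_X]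
          omega
  -- kernel and range
  have hker_card : Nat.card φ.ker ≤ q := by
    have h1 : Nat.card φ.ker = ((φ.ker : Set F)).ncard := Nat.card_coe_set_eq _
    have h2 : (φ.ker : Set F) = {y : F | y ^ q + y = 0} := by
      ext x; simp [AddMonoidHom.mem_ker, hφapp]
    rw [h1, h2]; exact hT
  have hrange_sub : (φ.range : Set F) ⊆ {y : F | y ^ q + y = 0} := by
    rintro y ⟨b, rfl⟩
    simp only [Set.mem_setOf_eq, hφapp b]
    have hbq2 : (b ^ q) ^ q = b := by
      rw [← pow_mul, show q * q = Fintype.card F by rw [hF]; ring,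
        FiniteField.pow_card]
    rw [hfrob, hbq2]
    have h2 : ∀ x : F, x + x = 0 := CharTwo.add_self_eq_zero
    linear_combination h2 b + h2 (b ^ q)
  have hcard_range : q ≤ Nat.card φ.range := by
    have h1 : Nat.card F = Nat.card (F ⧸ φ.ker) * Nat.card φ.ker :=
      AddSubgroup.card_eq_card_quotient_mul_card_addSubgroup φ.ker
    have h2 : Nat.card (F ⧸ φ.ker) = Nat.card φ.range :=
      Nat.card_congr (QuotientAddGroup.quotientKerEquivRange φ).toEquiv
    have h3' : Nat.card F = q ^ 2 := by rw [Nat.card_eq_fintype_card, hF]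
    have h5 : q * q ≤ Nat.card φ.range * q := by
      calc q * q = q ^ 2 := (sq q).symm
      _ = Nat.card φ.range * Nat.card φ.ker := by rw [← h3', h1, h2]
      _ ≤ Nat.card φ.range * q := Nat.mul_le_mul_left _ hker_card
    exact Nat.le_of_mul_le_mul_right h5 (by omega)
  have hrange_ncard : q ≤ ((φ.range : Set F)).ncard := by
    rw [← Nat.card_coe_set_eq]; exact hcard_range
  have hset_eq : (φ.range : Set F) = {y : F | y ^ q + y = 0} :=
    Set.eq_of_subset_of_ncard_le hrange_sub (hT.trans hrange_ncard) (Set.toFinite _)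
  have key : ∀ y : F, y ^ q = y → ∃ b : F, b ^ q + b = y := by
    intro y hy
    have hmem : y ∈ {y : F | y ^ q + y = 0} := by
      simp only [Set.mem_setOf_eq, hy]; exact CharTwo.add_self_eq_zero y
    rw [← hset_eq] at hmem
    obtain ⟨b, hb⟩ := hmem
    rw [hφapp] at hb
    exact ⟨b, hb⟩
  -- the main equivalence
  constructor
  · rintro ⟨b, hb⟩
    have hy : (α ^ (3 * i)) ^ q = α ^ (3 * i) := by
      rw [← hb, hfrob, ← pow_mul, show q * q = Fintype.card F by rw [hF]; ring,
        FiniteField.pow_card]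
      ring
    have hy0 : α ^ (3 * i) ≠ 0 := pow_ne_zero _ hα0
    have hy1 : (α ^ (3 * i)) ^ (q - 1) = 1 := by
      have hq1 : q - 1 + 1 = q := by omega
      rw [← hq1, pow_succ] at hy
      exact mul_right_cancel₀ hy0 (by rw [hy, one_mul])
    have hdvd : q ^ 2 - 1 ∣ 3 * i * (q - 1) := by
      rw [← horder]
      apply orderOf_dvd_of_pow_eq_one
      rw [pow_mul]; exact hy1
    rw [← hfac] at hdvd
    have hdvd2 : (q + 1) ∣ 3 * i :=
      (Nat.mul_dvd_mul_iff_right (show 0 < q - 1 by omega)).mp hdvd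
    rw [hm] at hdvd2
    exact (Nat.mul_dvd_mul_iff_left (show 0 < 3 by norm_num)).mp hdvd2
  · rintro ⟨j, rfl⟩
    apply key
    have h1 : (α ^ (3 * (m * j))) ^ (q - 1) = 1 := by
      rw [← pow_mul]
      have he : 3 * (m * j) * (q - 1) = (q ^ 2 - 1) * j := by
        rw [← hfac, hm]; ring
      rw [he, pow_mul, hpow1, one_pow]
    have hq1 : q - 1 + 1 = q := by omega
    rw [← hq1, pow_succ, h1, one_mul]
end
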